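/- arXiv:1702.07955 — 10 statements merged into one kernel-verified Lean document; each statement's English description precedes it below -/
import Mathlib

section
/- Let d ≥ 3 be an integer and let X be a metric space of bounded geometry. Then X is not amenable if and only if there exists a symmetric relation E ⊆ X × X with sup{d(x,y) | (x,y) ∈ E} < ∞ and E ∩ Δ_X = ∅ such that the simple graph on vertex set X with edge set {{x,y} | (x,y) ∈ E} is a d-regular forest, i.e. every vertex has degree exactly d and the graph contains no cycles. -/
/-!
Non-amenability, iterated, gives `m |F| ≤ |N_R(F)|` for `m = d - 1`, some `R` and every
finite `F`. Hall's theorem turns this into an injection `X × Fin m → X` moving points by at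
most `R`, and Schröder–Bernstein into an exactly `m`-to-one map `p : X → X` of bounded
displacement. The graph with edges `x — p x` is then `d`-regular, and it is a forest as soon as
`p` has no periodic points. These are removed by precomposing `p` with an involution: for each
periodic `x` and a section `s` of `p` avoiding periodic points, the terms of
`x, s (p x), s² (p x), …` are swapped in pairs `2k ↔ 2k + 3`. Fibre sizes are kept, every
former cycle now escapes along the even terms, and the odd terms fall back onto it.

Conversely, a finite set `F` in a `d`-regular forest spans fewer than `|F|` edges, so more than
`(d - 2) |F|` edges leave it, and their endpoints add at least `|F| / d` points to `F`.
-/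

open Function Set

section FunGraph

open SimpleGraph

variable {V : Type*} {f : V → V}

def funGraph (f : V → V) : SimpleGraph V := SimpleGraph.fromRel fun a b => f a = b

@[simp] lemma funGraph_adj {a b : V} : (funGraph f).Adj a b ↔ a ≠ b ∧ (f a = b ∨ f b = a) :=
  fromRel_adj _ _ _

lemma iterate_ne_self_of_periodicPts_eq_empty (hf : periodicPts f = ∅) {n : ℕ} (hn : 0 < n)
    (x : V) : f^[n] x ≠ x := fun h => (hf ▸ mk_mem_periodicPts hn h : x ∈ (∅ : Set V))

lemma neighborSet_funGraph (hf : periodicPts f = ∅) (x : V) :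
    (funGraph f).neighborSet x = insert (f x) (f ⁻¹' {x}) := by
  have h1 := iterate_ne_self_of_periodicPts_eq_empty hf one_pos
  ext y
  simp only [mem_neighborSet, funGraph_adj, mem_insert_iff, mem_preimage, mem_singleton_iff]
  constructor
  · rintro ⟨-, h | h⟩
    exacts [Or.inl h.symm, Or.inr h]
  · rintro (rfl | rfl)
    exacts [⟨(h1 x).symm, Or.inl rfl⟩, ⟨h1 y, Or.inr rfl⟩]

lemma ncard_neighborSet_funGraph (hf : periodicPts f = ∅) (x : V) (hx : (f ⁻¹' {x}).Finite) :
    ((funGraph f).neighborSet x).ncard = (f ⁻¹' {x}).ncard + 1 := by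
  rw [neighborSet_funGraph hf, ncard_insert_of_notMem _ hx]
  exact iterate_ne_self_of_periodicPts_eq_empty hf two_pos x

/-- Along a path whose first vertex `u` is mapped by `f` to a vertex `x` off the path, every edge
points backwards, so the whole path is unwound by iterating `f`. -/
lemma iterate_length_succ_eq_of_isPath {u v x : V} (w : (funGraph f).Walk u v) (hw : w.IsPath)
    (hx : x ∉ w.support) (hux : f u = x) : f^[w.length + 1] v = x := by
  induction w generalizing x with
  | nil => simpa using hux
  | cons h q ih =>
    rw [Walk.cons_isPath_iff] at hw
    rcases (funGraph_adj.1 h).2 with h' | h'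
    · exact absurd (by simp [← hux, h']) hx
    · rw [Walk.length_cons, iterate_succ_apply', ih hw.1 hw.2 h', hux]

lemma isAcyclic_funGraph (hf : periodicPts f = ∅) : (funGraph f).IsAcyclic := by
  have hper : ∀ {n : ℕ}, 0 < n → ∀ y, f^[n] y ≠ y :=
    iterate_ne_self_of_periodicPts_eq_empty hf
  intro v c hc
  have hlen := hc.three_le_length
  cases c with
  | nil => simp at hlen
  | cons h q =>
    obtain ⟨hq, hvq⟩ := (Walk.cons_isCycle_iff _ _).1 hc
    cases q with
    | nil => simp at hlen
    | cons h' q' =>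
      rename_i u₁ u₂
      obtain ⟨hq', hu₁⟩ := (Walk.cons_isPath_iff _ _).1 hq
      simp only [Walk.length_cons] at hlen
      rcases (funGraph_adj.1 h).2 with hv | hv <;> rcases (funGraph_adj.1 h').2 with hu | hu
      · have key :=
          iterate_length_succ_eq_of_isPath q'.reverse hq'.reverse (by simpa using hu₁) hv
        rw [Walk.length_reverse] at key
        exact hper (n := q'.length + 2) (by omega) u₁ (by rw [iterate_succ_apply, hu, key])
      · have key :=
          iterate_length_succ_eq_of_isPath q'.reverse hq'.reverse (by simpa using hu₁) hv
        rw [Walk.length_reverse, iterate_succ_apply, hu] at key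
        exact hper (by omega) u₁ key
      · obtain rfl : u₂ = v := hu.symm.trans hv
        exact hvq (by simp [Sym2.eq_swap])
      · have key := iterate_length_succ_eq_of_isPath q' hq' hu₁ hu
        exact hper (n := q'.length + 2) (by omega) v (by rw [iterate_succ_apply', key, hv])

end FunGraph

section CycleBreaking

variable {X : Type*}

/-- The first two terms are both preimages of `p x`; from the second term on, `p` walks back along
the sequence through non-periodic points. -/
def chain (p s : X → X) (x : X) : ℕ → X
  | 0 => x
  | n + 1 => s^[n + 1] (p x)

def swapIndex (n : ℕ) : ℕ := if n = 1 then 1 else if n % 2 = 0 then n + 3 else n - 3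

lemma swapIndex_swapIndex (n : ℕ) : swapIndex (swapIndex n) = n := by
  unfold swapIndex; split_ifs <;> omega

open Classical in
noncomputable def chainSwap (p s : X → X) (y : X) : X :=
  if h : ∃ xn : X × ℕ, xn.1 ∈ periodicPts p ∧ chain p s xn.1 xn.2 = y then
    chain p s h.choose.1 (swapIndex h.choose.2)
  else y

noncomputable def breakCycles (p s : X → X) : X → X := p ∘ chainSwap p s

variable {p s : X → X}

lemma Function.LeftInverse.iterate_iterate_add (hs : LeftInverse p s) (n k : ℕ) (y : X) :
    p^[n] (s^[k + n] y) = s^[k] y := by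
  rw [add_comm, iterate_add_apply, (hs.iterate n) _]

lemma chain_succ_notMem_periodicPts (hs' : ∀ y, s y ∉ periodicPts p) (x : X) (n : ℕ) :
    chain p s x (n + 1) ∉ periodicPts p := by
  rw [chain, iterate_succ_apply']
  exact hs' _

lemma apply_chain_add_two (hs : LeftInverse p s) (x : X) (n : ℕ) :
    p (chain p s x (n + 2)) = chain p s x (n + 1) :=
  hs.iterate_iterate_add 1 (n + 1) (p x)

lemma apply_chain_one (hs : LeftInverse p s) (x : X) : p (chain p s x 1) = p x :=
  hs (p x)

lemma chain_injective (hs : LeftInverse p s) (hs' : ∀ y, s y ∉ periodicPts p) {x x' : X}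
    (hx : x ∈ periodicPts p) (hx' : x' ∈ periodicPts p) {n n' : ℕ}
    (h : chain p s x n = chain p s x' n') : x = x' ∧ n = n' := by
  wlog hle : n ≤ n' generalizing x x' n n'
  · exact (this hx' hx h.symm (by omega)).imp Eq.symm Eq.symm
  cases n with
  | zero =>
    cases n' with
    | zero => exact ⟨h, rfl⟩
    | succ n' => exact absurd (h ▸ hx) (chain_succ_notMem_periodicPts hs' x' n')
  | succ n =>
    obtain ⟨k, rfl⟩ := Nat.exists_eq_add_of_le' hle
    have hpx : p x = s^[k] (p x') := by
      have := congrArg p^[n + 1] h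
      change p^[n + 1] (s^[n + 1] (p x)) = p^[n + 1] (s^[k + (n + 1)] (p x')) at this
      rwa [(hs.iterate (n + 1)) _, hs.iterate_iterate_add] at this
    have hpx_mem : p x ∈ periodicPts p := (bijOn_periodicPts p).mapsTo hx
    cases k with
    | zero => exact ⟨(bijOn_periodicPts p).injOn hx hx' hpx, (zero_add _).symm⟩
    | succ k =>
      rw [hpx, iterate_succ_apply'] at hpx_mem
      exact absurd hpx_mem (hs' _)

lemma chainSwap_chain (hs : LeftInverse p s) (hs' : ∀ y, s y ∉ periodicPts p) {x : X}
    (hx : x ∈ periodicPts p) (n : ℕ) :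
    chainSwap p s (chain p s x n) = chain p s x (swapIndex n) := by
  have h : ∃ xn : X × ℕ, xn.1 ∈ periodicPts p ∧ chain p s xn.1 xn.2 = chain p s x n :=
    ⟨(x, n), hx, rfl⟩
  obtain ⟨h₁, h₂⟩ := chain_injective hs hs' h.choose_spec.1 hx h.choose_spec.2
  rw [chainSwap, dif_pos h, h₁, h₂]

lemma chainSwap_of_forall_ne {y : X} (hy : ∀ x ∈ periodicPts p, ∀ n, chain p s x n ≠ y) :
    chainSwap p s y = y := by
  rw [chainSwap, dif_neg]
  rintro ⟨⟨x, n⟩, hx, h⟩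
  exact hy x hx n h

lemma chainSwap_involutive (hs : LeftInverse p s) (hs' : ∀ y, s y ∉ periodicPts p) :
    Involutive (chainSwap p s) := by
  intro y
  by_cases hy : ∃ x ∈ periodicPts p, ∃ n, chain p s x n = y
  · obtain ⟨x, hx, n, rfl⟩ := hy
    rw [chainSwap_chain hs hs' hx, chainSwap_chain hs hs' hx, swapIndex_swapIndex]
  · push Not at hy
    rw [chainSwap_of_forall_ne hy, chainSwap_of_forall_ne hy]

lemma ncard_preimage_breakCycles (hs : LeftInverse p s) (hs' : ∀ y, s y ∉ periodicPts p)
    (v : X) : (breakCycles p s ⁻¹' {v}).ncard = (p ⁻¹' {v}).ncard := by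
  have hinv := chainSwap_involutive hs hs'
  rw [breakCycles, preimage_comp]
  exact ncard_preimage_of_injective_subset_range hinv.injective
    (by simp [hinv.surjective.range_eq])

lemma breakCycles_chain_even (hs : LeftInverse p s) (hs' : ∀ y, s y ∉ periodicPts p) {x : X}
    (hx : x ∈ periodicPts p) (k : ℕ) :
    breakCycles p s (chain p s x (2 * k)) = chain p s x (2 * k + 2) := by
  rw [breakCycles, comp_apply, chainSwap_chain hs hs' hx,
    show swapIndex (2 * k) = 2 * k + 1 + 2 by unfold swapIndex; split_ifs <;> omega]
  exact apply_chain_add_two hs x _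

lemma iterate_breakCycles_chain_even (hs : LeftInverse p s) (hs' : ∀ y, s y ∉ periodicPts p)
    {x : X} (hx : x ∈ periodicPts p) (k j : ℕ) :
    (breakCycles p s)^[j] (chain p s x (2 * k)) = chain p s x (2 * (k + j)) := by
  induction j with
  | zero => rfl
  | succ j ih => rw [iterate_succ_apply', ih, breakCycles_chain_even hs hs' hx]; rfl

lemma chain_even_notMem_periodicPts (hs : LeftInverse p s) (hs' : ∀ y, s y ∉ periodicPts p)
    {x : X} (hx : x ∈ periodicPts p) (k : ℕ) :
    chain p s x (2 * k) ∉ periodicPts (breakCycles p s) := by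
  intro h
  obtain ⟨n, hn, hper⟩ := mem_periodicPts.1 h
  have := (chain_injective hs hs' hx hx <|
    (iterate_breakCycles_chain_even hs hs' hx k n).symm.trans hper).2
  omega

/-- Odd chain points step down the chain, towards `p x`, which is itself the start of the
chain of the periodic point `p x`. -/
lemma chain_notMem_periodicPts (hs : LeftInverse p s) (hs' : ∀ y, s y ∉ periodicPts p)
    {x : X} (hx : x ∈ periodicPts p) (n : ℕ) :
    chain p s x n ∉ periodicPts (breakCycles p s) := by
  induction n using Nat.strong_induction_on with
  | _ n ih =>
    obtain ⟨k, rfl | rfl⟩ := Nat.even_or_odd' n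
    · exact chain_even_notMem_periodicPts hs hs' hx k
    intro h
    have himage := (bijOn_periodicPts _).mapsTo h
    rw [breakCycles, comp_apply, chainSwap_chain hs hs' hx] at himage
    rcases (by omega : k = 0 ∨ k = 1 ∨ 2 ≤ k) with rfl | rfl | hk
    · rw [show swapIndex (2 * 0 + 1) = 1 from rfl, apply_chain_one hs] at himage
      exact chain_even_notMem_periodicPts hs hs' ((bijOn_periodicPts p).mapsTo hx) 0 himage
    · rw [show swapIndex (2 * 1 + 1) = 0 from rfl] at himage
      exact chain_even_notMem_periodicPts hs hs' ((bijOn_periodicPts p).mapsTo hx) 0 himage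
    · rw [show swapIndex (2 * k + 1) = (2 * k - 4) + 2 by unfold swapIndex; split_ifs <;> omega,
        apply_chain_add_two hs] at himage
      exact ih _ (by omega) himage

lemma periodicPts_breakCycles (hs : LeftInverse p s) (hs' : ∀ y, s y ∉ periodicPts p) :
    periodicPts (breakCycles p s) = ∅ := by
  refine eq_empty_of_forall_notMem fun y hy => ?_
  set q := breakCycles p s
  have hqp : EqOn q p (periodicPts q) := fun z hz => by
    simp only [q, breakCycles, comp_apply]
    rw [chainSwap_of_forall_ne fun x hx n h => chain_notMem_periodicPts hs hs' hx n (h ▸ hz)]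
  have hiter : ∀ k, q^[k] y = p^[k] y := by
    intro k
    induction k with
    | zero => rfl
    | succ k ih =>
      rw [iterate_succ_apply', iterate_succ_apply',
        hqp ((bijOn_periodicPts q).mapsTo.iterate k hy), ih]
  obtain ⟨n, hn, hper⟩ := mem_periodicPts.1 hy
  have hyp : y ∈ periodicPts p := mk_mem_periodicPts hn <| by
    rw [IsPeriodicPt, IsFixedPt, ← hiter]; exact hper
  exact chain_notMem_periodicPts hs hs' hyp 0 hy

lemma exists_iterate_chain_add_three (hs : LeftInverse p s) (x : X) (n : ℕ) :
    ∃ b ≤ 1, p^[3] (chain p s x (n + 3)) = p^[b] (chain p s x n) := by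
  cases n with
  | zero => exact ⟨1, le_rfl, (hs.iterate 3) (p x)⟩
  | succ n => exact ⟨0, zero_le_one, hs.iterate_iterate_add 3 (n + 1) (p x)⟩

lemma exists_iterate_chainSwap_eq (hs : LeftInverse p s) (hs' : ∀ y, s y ∉ periodicPts p)
    (y : X) : ∃ a b, a ≤ 3 ∧ b ≤ 3 ∧ p^[a] (chainSwap p s y) = p^[b] y := by
  by_cases hy : ∃ x ∈ periodicPts p, ∃ n, chain p s x n = y
  · obtain ⟨x, hx, n, rfl⟩ := hy
    rw [chainSwap_chain hs hs' hx]
    unfold swapIndex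
    split_ifs with h1 h2
    · exact ⟨0, 0, by simp [h1]⟩
    · obtain ⟨b, hb, h⟩ := exists_iterate_chain_add_three hs x n
      exact ⟨3, b, le_rfl, by omega, h⟩
    · obtain ⟨b, hb, h⟩ := exists_iterate_chain_add_three hs x (n - 3)
      rw [show n - 3 + 3 = n by omega] at h
      exact ⟨b, 3, by omega, le_rfl, h.symm⟩
  · push Not at hy
    exact ⟨0, 0, by norm_num, by norm_num, by rw [chainSwap_of_forall_ne hy]⟩

lemma dist_iterate_le {Y : Type*} [PseudoMetricSpace Y] {f : Y → Y} {R : ℝ}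
    (hf : ∀ y, dist y (f y) ≤ R) (y : Y) (n : ℕ) : dist y (f^[n] y) ≤ n * R := by
  induction n with
  | zero => simp
  | succ n ih =>
    rw [iterate_succ_apply', Nat.cast_succ, add_mul, one_mul]
    exact (dist_triangle _ _ _).trans (add_le_add ih (hf _))

lemma dist_breakCycles_le [PseudoMetricSpace X] (hs : LeftInverse p s)
    (hs' : ∀ y, s y ∉ periodicPts p) {R : ℝ} (hp : ∀ y, dist y (p y) ≤ R) (y : X) :
    dist y (breakCycles p s y) ≤ 7 * R := by
  obtain ⟨a, b, ha, hb, h⟩ := exists_iterate_chainSwap_eq hs hs' y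
  set z := chainSwap p s y
  have hR : 0 ≤ R := dist_nonneg.trans (hp y)
  have ha' : (a : ℝ) ≤ 3 := by exact_mod_cast ha
  have hb' : (b : ℝ) ≤ 3 := by exact_mod_cast hb
  calc dist y (p z) ≤ dist y (p^[b] y) + dist (p^[b] y) z + dist z (p z) :=
        dist_triangle4 _ _ _ _
    _ = dist y (p^[b] y) + dist z (p^[a] z) + dist z (p z) := by rw [← h, dist_comm (p^[a] z)]
    _ ≤ b * R + a * R + R := by
        gcongr
        exacts [dist_iterate_le hp y b, dist_iterate_le hp z a, hp z]
    _ ≤ 7 * R := by nlinarith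

end CycleBreaking

section Expansion

variable {X : Type*} [PseudoMetricSpace X]

def closedNbhd (F : Set X) (r : ℝ) : Set X := {y | ∃ x ∈ F, dist x y ≤ r}

def HasBoundedGeometry (X : Type*) [PseudoMetricSpace X] : Prop :=
  ∀ r : ℝ, 0 ≤ r → ∀ x : X, {y : X | dist x y ≤ r}.Finite

def IsAmenable (X : Type*) [PseudoMetricSpace X] : Prop :=
  ∀ θ : ℝ, 1 < θ → ∀ r : ℝ, 0 ≤ r → ∃ F : Set X, F.Finite ∧ F.Nonempty ∧
    ((closedNbhd F r).ncard : ℝ) ≤ θ * F.ncard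

lemma HasBoundedGeometry.closedNbhd_finite (hX : HasBoundedGeometry X) {F : Set X}
    (hF : F.Finite) {r : ℝ} (hr : 0 ≤ r) : (closedNbhd F r).Finite := by
  have : closedNbhd F r = ⋃ x ∈ F, {y | dist x y ≤ r} := by ext; simp [closedNbhd]
  rw [this]
  exact hF.biUnion fun x _ => hX r hr x

lemma subset_closedNbhd (F : Set X) {r : ℝ} (hr : 0 ≤ r) : F ⊆ closedNbhd F r :=
  fun x hx => ⟨x, hx, by simpa using hr⟩

lemma closedNbhd_closedNbhd_subset (F : Set X) (r r' : ℝ) :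
    closedNbhd (closedNbhd F r) r' ⊆ closedNbhd F (r + r') := by
  rintro z ⟨y, ⟨x, hx, hxy⟩, hyz⟩
  exact ⟨x, hx, (dist_triangle x y z).trans (add_le_add hxy hyz)⟩

lemma HasBoundedGeometry.pow_mul_ncard_le (hX : HasBoundedGeometry X) {θ r : ℝ} (hθ : 0 ≤ θ)
    (hr : 0 ≤ r)
    (hexp : ∀ F : Set X, F.Finite → F.Nonempty → θ * F.ncard ≤ (closedNbhd F r).ncard)
    {F : Set X} (hF : F.Finite) (hne : F.Nonempty) (k : ℕ) :
    θ ^ k * F.ncard ≤ (closedNbhd F (k * r)).ncard := by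
  induction k with
  | zero =>
    simpa using ncard_le_ncard (subset_closedNbhd F le_rfl) (hX.closedNbhd_finite hF le_rfl)
  | succ k ih =>
    have hkr : 0 ≤ k * r := by positivity
    have hN := hX.closedNbhd_finite hF hkr
    calc θ ^ (k + 1) * F.ncard = θ * (θ ^ k * F.ncard) := by ring
      _ ≤ θ * (closedNbhd F (k * r)).ncard := by gcongr
      _ ≤ (closedNbhd (closedNbhd F (k * r)) r).ncard :=
        hexp _ hN (hne.mono (subset_closedNbhd F hkr))
      _ ≤ (closedNbhd F ((k + 1 : ℕ) * r)).ncard := by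
        rw [Nat.cast_succ, add_one_mul]
        exact_mod_cast ncard_le_ncard (closedNbhd_closedNbhd_subset F _ _)
          (hX.closedNbhd_finite hF (by positivity))

lemma HasBoundedGeometry.exists_expansion_of_not_isAmenable (hX : HasBoundedGeometry X)
    (hX' : ¬ IsAmenable X) (m : ℕ) :
    ∃ R, 0 ≤ R ∧ ∀ F : Finset X, m * F.card ≤ (closedNbhd (F : Set X) R).ncard := by
  simp only [IsAmenable, not_forall, not_exists, not_and, not_le] at hX'
  obtain ⟨θ, hθ, r, hr, hexp⟩ := hX'
  obtain ⟨k, hk⟩ := pow_unbounded_of_one_lt (m : ℝ) hθ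
  refine ⟨k * r, by positivity, fun F => ?_⟩
  rcases F.eq_empty_or_nonempty with rfl | hne
  · simp
  have := hX.pow_mul_ncard_le (by positivity) hr (fun F hF hne => (hexp F hF hne).le)
    F.finite_toSet (by exact_mod_cast hne) k
  rw [ncard_coe_finset] at this
  exact_mod_cast (mul_le_mul_of_nonneg_right hk.le (by positivity)).trans this

lemma HasBoundedGeometry.exists_injective_of_expansion (hX : HasBoundedGeometry X) {m : ℕ}
    {R : ℝ} (hR : 0 ≤ R)
    (hexp : ∀ F : Finset X, m * F.card ≤ (closedNbhd (F : Set X) R).ncard) :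
    ∃ g : X × Fin m → X, Injective g ∧ ∀ q, dist q.1 (g q) ≤ R := by
  classical
  let t : X × Fin m → Finset X := fun q => (hX R hR q.1).toFinset
  suffices hall : ∀ S : Finset (X × Fin m), S.card ≤ (S.biUnion t).card by
    obtain ⟨g, hg, hgt⟩ := (Finset.all_card_le_biUnion_card_iff_exists_injective t).1 hall
    exact ⟨g, hg, fun q => by simpa [t] using hgt q⟩
  intro S
  calc S.card ≤ (S.image Prod.fst ×ˢ (Finset.univ : Finset (Fin m))).card :=
        Finset.card_le_card fun q hq =>
          Finset.mem_product.2 ⟨Finset.mem_image_of_mem _ hq, Finset.mem_univ _⟩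
    _ = m * (S.image Prod.fst).card := by simp [mul_comm]
    _ ≤ (closedNbhd (S.image Prod.fst : Set X) R).ncard := hexp _
    _ ≤ (S.biUnion t).card := by
        rw [← ncard_coe_finset (S.biUnion t)]
        refine ncard_le_ncard ?_ (Finset.finite_toSet _)
        rintro y ⟨x, hx, hxy⟩
        obtain ⟨q, hq, rfl⟩ := Finset.mem_image.1 hx
        exact Finset.mem_biUnion.2 ⟨q, hq, by simpa [t] using hxy⟩

/-- `p` is the Schröder–Bernstein bijection `X ≃ X × Fin m` built from `x ↦ (x, 0)` and `g`,
followed by the first projection. -/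
lemma exists_ncard_preimage_eq_of_injective {m : ℕ} (hm : 0 < m) {R : ℝ} (hR : 0 ≤ R)
    {g : X × Fin m → X} (hg : Injective g) (hgR : ∀ q, dist q.1 (g q) ≤ R) :
    ∃ p : X → X, (∀ v, (p ⁻¹' {v}).ncard = m) ∧ ∀ x, dist x (p x) ≤ R := by
  obtain ⟨h, hh, hhR⟩ := Embedding.schroeder_bernstein_of_rel
    (f := fun x => (x, (⟨0, hm⟩ : Fin m))) (g := g) (fun a b hab => congrArg Prod.fst hab) hg
    (fun x q => dist x q.1 ≤ R) (fun x => by simpa using hR)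
    (fun q => by simpa [dist_comm] using hgR q)
  refine ⟨fun x => (h x).1, fun v => ?_, hhR⟩
  have hfib : Prod.fst ⁻¹' {v} = range (Prod.mk v : Fin m → X × Fin m) := by
    ext q; simp [eq_comm, Prod.ext_iff]
  rw [show (fun x => (h x).1) ⁻¹' {v} = h ⁻¹' (Prod.fst ⁻¹' {v}) from rfl,
    ncard_preimage_of_injective_subset_range hh.1 (by simp [hh.2.range_eq]), hfib,
    ncard_range_of_injective (Prod.mk_right_injective v), Nat.card_eq_fintype_card,
    Fintype.card_fin]

end Expansion

lemma exists_leftInverse_notMem_periodicPts {X : Type*} {p : X → X}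
    (hp : ∀ y, 1 < (p ⁻¹' {y}).ncard) :
    ∃ s : X → X, LeftInverse p s ∧ ∀ y, s y ∉ periodicPts p := by
  have h : ∀ y, ∃ x, p x = y ∧ x ∉ periodicPts p := by
    intro y
    obtain ⟨a, b, ha, hb, hab⟩ :=
      (one_lt_ncard_iff (finite_of_ncard_pos (zero_lt_one.trans (hp y)))).1 (hp y)
    by_contra! hall
    exact hab ((bijOn_periodicPts p).injOn (hall a ha) (hall b hb) (ha.trans hb.symm))
  choose s hs hs' using h
  exact ⟨s, hs, hs'⟩

lemma HasBoundedGeometry.exists_aperiodic_of_not_isAmenable {X : Type*} [PseudoMetricSpace X]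
    (hX : HasBoundedGeometry X) (hX' : ¬ IsAmenable X) {m : ℕ} (hm : 2 ≤ m) :
    ∃ f : X → X, periodicPts f = ∅ ∧ (∀ v, (f ⁻¹' {v}).ncard = m) ∧
      ∃ R, ∀ x, dist x (f x) ≤ R := by
  obtain ⟨R, hR, hexp⟩ := hX.exists_expansion_of_not_isAmenable hX' m
  obtain ⟨g, hg, hgR⟩ := hX.exists_injective_of_expansion hR hexp
  obtain ⟨p, hpm, hpR⟩ := exists_ncard_preimage_eq_of_injective (by omega) hR hg hgR
  obtain ⟨s, hs, hs'⟩ := exists_leftInverse_notMem_periodicPts (p := p) (by simp [hpm]; omega)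
  exact ⟨breakCycles p s, periodicPts_breakCycles hs hs',
    fun v => (ncard_preimage_breakCycles hs hs' v).trans (hpm v), 7 * R,
    dist_breakCycles_le hs hs' hpR⟩

namespace SimpleGraph

variable {V : Type*} {G : SimpleGraph V}

/-- A finite forest sits inside a spanning tree of the complete graph. -/
lemma IsAcyclic.card_edgeFinset_lt [Fintype V] [Nonempty V] [Fintype G.edgeSet]
    (hG : G.IsAcyclic) : G.edgeFinset.card < Fintype.card V := by
  classical
  obtain ⟨T, hGT, -, hT⟩ := connected_top.exists_isTree_le_of_le_of_isAcyclic le_top hG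
  have := hT.card_edgeFinset
  have := Finset.card_le_card (edgeFinset_mono hGT)
  omega

lemma IsAcyclic.sum_card_adj_lt [DecidableRel G.Adj] (hG : G.IsAcyclic) {F : Finset V}
    (hF : F.Nonempty) : ∑ v ∈ F, (F.filter (G.Adj v)).card < 2 * F.card := by
  classical
  let H := G.induce (F : Set V)
  have : Nonempty (F : Set V) := hF.to_subtype
  have hdeg : ∀ v : (F : Set V), H.degree v = (F.filter (G.Adj v)).card := by
    intro v
    rw [← card_neighborFinset_eq_degree, neighborFinset_eq_filter,
      ← Finset.card_map (Embedding.subtype _)]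
    congr 1
    ext w
    simp [H, and_comm]
  have hcard : H.edgeFinset.card < F.card := by
    simpa using (hG.induce (F : Set V)).card_edgeFinset_lt
  calc ∑ v ∈ F, (F.filter (G.Adj v)).card = ∑ v : (F : Set V), H.degree v := by
        rw [← Finset.sum_finset_coe]
        exact Finset.sum_congr rfl fun v _ => (hdeg v).symm
    _ = 2 * H.edgeFinset.card := H.sum_degrees_eq_twice_card_edges
    _ < 2 * F.card := by omega

/-- Double counting the edges leaving `F`: fewer than `2 |F|` of the `d |F|` edge ends at `F` stay
inside `F`, and each vertex outside `F` absorbs at most `d` of the others. -/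
lemma IsAcyclic.mul_card_lt_mul_card_closedNbhd [DecidableEq V] [DecidableRel G.Adj]
    [G.LocallyFinite] (hG : G.IsAcyclic) {d : ℕ} (hreg : G.IsRegularOfDegree d) (hd : 3 ≤ d)
    {F : Finset V} (hF : F.Nonempty) :
    (d + 1) * F.card < d * (F ∪ F.biUnion (G.neighborFinset ·)).card := by
  set N := F ∪ F.biUnion (G.neighborFinset ·)
  have hFN : F ⊆ N := Finset.subset_union_left
  have hout : ∀ v ∈ F, (N.filter (G.Adj v)).card = d := by
    intro v hv
    rw [← hreg v, ← card_neighborFinset_eq_degree]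
    congr 1
    ext w
    simp only [Finset.mem_filter, mem_neighborFinset, and_iff_right_iff_imp]
    exact fun hvw =>
      Finset.mem_union_right _ (Finset.mem_biUnion.2 ⟨v, hv, by simpa using hvw⟩)
  have hin : ∀ w, (F.filter (G.Adj · w)).card ≤ d := fun w => by
    rw [← hreg w, ← card_neighborFinset_eq_degree]
    exact Finset.card_le_card fun v hv => by
      simpa [G.adj_comm] using (Finset.mem_filter.1 hv).2
  have hcount : d * F.card = ∑ w ∈ N, (F.filter (G.Adj · w)).card :=
    calc d * F.card = ∑ v ∈ F, (N.filter (G.Adj v)).card := by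
          rw [Finset.sum_congr rfl hout, Finset.sum_const, smul_eq_mul, mul_comm]
      _ = _ := Finset.sum_card_bipartiteAbove_eq_sum_card_bipartiteBelow _
  have hinside : ∑ w ∈ F, (F.filter (G.Adj · w)).card < 2 * F.card := by
    simpa only [G.adj_comm] using hG.sum_card_adj_lt hF
  have houtside : ∑ w ∈ N \ F, (F.filter (G.Adj · w)).card ≤ (N \ F).card * d :=
    Finset.sum_le_card_nsmul _ _ _ fun w _ => hin w
  rw [← Finset.sum_sdiff hFN] at hcount
  rw [Finset.card_sdiff_of_subset hFN] at houtside
  obtain ⟨c, hc⟩ := Nat.exists_eq_add_of_le (Finset.card_le_card hFN)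
  rw [hc, Nat.add_sub_cancel_left] at houtside
  rw [hc]
  nlinarith

end SimpleGraph

lemma HasBoundedGeometry.not_isAmenable_of_isAcyclic {X : Type*} [PseudoMetricSpace X]
    (hX : HasBoundedGeometry X) {G : SimpleGraph X} (hG : G.IsAcyclic) {d : ℕ} (hd : 3 ≤ d)
    (hdeg : ∀ x, (G.neighborSet x).ncard = d) {r : ℝ}
    (hr : ∀ a b, G.Adj a b → dist a b ≤ r) :
    ¬ IsAmenable X := by
  classical
  have : G.LocallyFinite := fun x => (finite_of_ncard_ne_zero (by rw [hdeg x]; omega)).fintype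
  have hreg : G.IsRegularOfDegree d := fun x => by
    rw [← G.card_neighborSet_eq_degree, ← Nat.card_eq_fintype_card, Nat.card_coe_set_eq, hdeg]
  intro hX'
  have hd₀ : (0 : ℝ) < d := by positivity
  obtain ⟨F, hF, hFne, hle⟩ :=
    hX' ((d + 1) / d) (by rw [one_lt_div hd₀]; linarith) (max r 0) (le_max_right _ _)
  obtain ⟨F, rfl⟩ := hF.exists_finset_coe
  have hsub : ((F ∪ F.biUnion (G.neighborFinset ·) : Finset X) : Set X) ⊆
      closedNbhd (F : Set X) (max r 0) := by
    intro y hy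
    simp only [Finset.coe_union, Finset.coe_biUnion, mem_union, Finset.mem_coe, mem_iUnion,
      SimpleGraph.mem_neighborFinset, exists_prop] at hy
    rcases hy with hy | ⟨v, hv, hvy⟩
    · exact subset_closedNbhd _ (le_max_right _ _) hy
    · exact ⟨v, hv, (hr v y hvy).trans (le_max_left _ _)⟩
  have hcard := ncard_le_ncard hsub (hX.closedNbhd_finite F.finite_toSet (le_max_right _ _))
  rw [ncard_coe_finset] at hcard hle
  have hlt : ((d + 1) * F.card : ℝ) < d * (closedNbhd (F : Set X) (max r 0)).ncard := by
    exact_mod_cast (hG.mul_card_lt_mul_card_closedNbhd hreg hd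
      (by exact_mod_cast hFne)).trans_le (Nat.mul_le_mul_left d hcard)
  have : (d : ℝ) * ((d + 1) / d * F.card) = (d + 1) * F.card := by field_simp
  nlinarith

/-- A metric space of bounded geometry is non-amenable if and only if
it carries a symmetric, irreflexive, uniformly bounded relation `E` whose associated
simple graph is a `d`-regular forest (for a given `d ≥ 3`). -/
theorem stmt_0 {X : Type*} [MetricSpace X] (d : ℕ) (hd : 3 ≤ d)
    (hbg : ∀ r : ℝ, 0 ≤ r → ∀ x : X, {y : X | dist x y ≤ r}.Finite) :
    (¬ ∀ θ : ℝ, 1 < θ → ∀ r : ℝ, 0 ≤ r → ∃ F : Set X, F.Finite ∧ F.Nonempty ∧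
        ({y : X | ∃ x ∈ F, dist x y ≤ r}.ncard : ℝ) ≤ θ * (F.ncard : ℝ)) ↔
      ∃ E : Set (X × X),
        (∀ p : X × X, p ∈ E → (p.2, p.1) ∈ E) ∧
        (∃ r : ℝ, ∀ p : X × X, p ∈ E → dist p.1 p.2 ≤ r) ∧
        (∀ x : X, (x, x) ∉ E) ∧
        (∀ x : X, ((SimpleGraph.fromRel (fun a b : X => (a, b) ∈ E)).neighborSet x).ncard = d) ∧
        (SimpleGraph.fromRel (fun a b : X => (a, b) ∈ E)).IsAcyclic := by
  change ¬ IsAmenable X ↔ _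
  constructor
  · intro hX'
    obtain ⟨f, hf, hfib, R, hR⟩ :=
      HasBoundedGeometry.exists_aperiodic_of_not_isAmenable hbg hX' (m := d - 1) (by omega)
    set E : Set (X × X) := {q | f q.1 = q.2 ∨ f q.2 = q.1}
    have hE : SimpleGraph.fromRel (fun a b : X => (a, b) ∈ E) = funGraph f := by
      ext a b
      simp only [E, funGraph, SimpleGraph.fromRel_adj, mem_ofPred_eq]
      tauto
    refine ⟨E, fun q hq => hq.symm, ⟨R, ?_⟩, fun x hx => ?_, fun x => ?_,
      hE ▸ isAcyclic_funGraph hf⟩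
    · rintro ⟨a, b⟩ (h | h) <;> dsimp only at h ⊢ <;> subst h
      exacts [hR a, (dist_comm _ _).trans_le (hR b)]
    · exact iterate_ne_self_of_periodicPts_eq_empty hf one_pos x (hx.elim id id)
    · rw [hE, ncard_neighborSet_funGraph hf x (finite_of_ncard_ne_zero (by rw [hfib]; omega)),
        hfib]
      omega
  · rintro ⟨E, -, ⟨r, hr⟩, -, hdeg, hacyc⟩
    refine HasBoundedGeometry.not_isAmenable_of_isAcyclic hbg hacyc hd hdeg (r := r)
      fun a b hab => ?_
    rcases ((SimpleGraph.fromRel_adj _ _ _).1 hab).2 with h | h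
    exacts [hr _ h, (dist_comm a b).trans_le (hr _ h)]
end

section
/- Let a group G act on a nonempty set X. Then the action is amenable, i.e. there exists a positive linear functional μ on the space ℓ∞(X) of bounded real-valued functions on X with μ(1) = 1 and μ(f ∘ (x ↦ g·x)) = μ(f) for all f ∈ ℓ∞(X) and g ∈ G, if and only if for every θ > 1 and every finite subset E ⊆ G there exists a finite nonempty subset F ⊆ X such that |{g·x | g ∈ E, x ∈ F}| ≤ θ·|F|. -/
/-!
A Følner set `F` for `E`, i.e. one with `|(E ∪ {1}) • F| ≤ (1 + ε) |F|`, makes the average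
`f ↦ 𝔼 x ∈ F, f x` almost invariant under every `g ∈ E`, so an ultrafilter limit of such averages
is an invariant mean. Conversely, if the condition fails for some `θ > 1` and `E`, then
`|Eⁿ • F| ≥ θⁿ |F| ≥ 2 |F|` for every finite `F` and a suitable `n`, and Hall's marriage theorem
turns this into an injection `(i, x) ↦ c (i, x) • x` of `X ⊕ X` into `X` with `c (i, x) ∈ Eⁿ`.
For each `i` the pieces `{x | c (i, x) = g}` partition `X`, so an invariant mean gives their
translates by `g` total mass `2`; these translates are pairwise disjoint, which forces mass `≤ 1`.
-/

/-- The space `ℓ∞(X)` of bounded real-valued functions on a set `X`, as a submodule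
of `X → ℝ`. -/
def BddFns (X : Type*) : Submodule ℝ (X → ℝ) where
  carrier := {f : X → ℝ | ∃ C : ℝ, ∀ x : X, |f x| ≤ C}
  add_mem' := by
    rintro f g ⟨C, hC⟩ ⟨D, hD⟩
    exact ⟨C + D, fun x => (abs_add_le _ _).trans (add_le_add (hC x) (hD x))⟩
  zero_mem' := ⟨0, fun x => by simp⟩
  smul_mem' := by
    rintro c f ⟨C, hC⟩
    refine ⟨|c| * C, fun x => ?_⟩
    rw [Pi.smul_apply, smul_eq_mul, abs_mul]
    exact mul_le_mul_of_nonneg_left (hC x) (abs_nonneg c)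

open Pointwise Filter Topology Function
open scoped BigOperators

lemma abs_sum_le_card_mul {ι : Type*} {s : Finset ι} {f : ι → ℝ} {C : ℝ}
    (hC : ∀ i, |f i| ≤ C) : |∑ i ∈ s, f i| ≤ s.card * C := by
  simpa using (Finset.abs_sum_le_sum_abs f s).trans
    (Finset.sum_le_card_nsmul s _ C fun i _ => hC i)

section FinsetSMul

variable {G X : Type*} [DecidableEq X]

lemma ncard_setOf_exists_smul_eq [SMul G X] (E : Finset G) (F : Finset X) :
    {z : X | ∃ g ∈ E, ∃ x ∈ F, g • x = z}.ncard = (E • F).card := by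
  rw [← Set.ncard_coe_finset, Finset.coe_smul]
  rfl

theorem exists_injective_smul_of_card_mul_le [SMul G X] {ι : Type*} [Fintype ι] {E : Finset G}
    (h : ∀ F : Finset X, Fintype.card ι * F.card ≤ (E • F).card) :
    ∃ c : ι × X → G, (∀ p, c p ∈ E) ∧ Injective fun p => c p • p.2 := by
  classical
  let t : ι × X → Finset X := fun p => E.image (· • p.2)
  have hall : ∀ s : Finset (ι × X), s.card ≤ (s.biUnion t).card := by
    intro s
    calc s.card ≤ (Finset.univ ×ˢ s.image Prod.snd).card :=
          Finset.card_le_card fun p hp => by simpa using ⟨p.1, hp⟩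
      _ = Fintype.card ι * (s.image Prod.snd).card := Finset.card_product _ _
      _ ≤ (E • s.image Prod.snd).card := h _
      _ ≤ (s.biUnion t).card := Finset.card_le_card fun z hz => by
          obtain ⟨g, hg, x, hx, rfl⟩ := Finset.mem_smul.1 hz
          obtain ⟨p, hp, rfl⟩ := Finset.mem_image.1 hx
          exact Finset.mem_biUnion.2 ⟨p, hp, Finset.mem_image_of_mem _ hg⟩
  obtain ⟨φ, hφ, hφt⟩ := (Finset.all_card_le_biUnion_card_iff_exists_injective t).1 hall
  choose c hcE hc using fun p => Finset.mem_image.1 (hφt p)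
  exact ⟨c, hcE, fun p q hpq => hφ (by simpa [hc] using hpq)⟩

lemma pow_mul_card_le_card_pow_smul [Monoid G] [MulAction G X] [DecidableEq G] {E : Finset G}
    {θ : ℝ} (hθ : 0 ≤ θ) (h : ∀ F : Finset X, θ * F.card ≤ (E • F).card) (n : ℕ)
    (F : Finset X) : θ ^ n * F.card ≤ (E ^ n • F).card := by
  induction n with
  | zero => simp
  | succ n ih =>
    calc θ ^ (n + 1) * F.card = θ * (θ ^ n * F.card) := by ring
      _ ≤ θ * (E ^ n • F).card := by gcongr
      _ ≤ (E • E ^ n • F).card := h _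
      _ = (E ^ (n + 1) • F).card := by rw [pow_succ', mul_smul]

variable [Group G] [MulAction G X]

lemma card_smul_finset_sdiff_add_card_le [DecidableEq G] {E : Finset G} {g : G} (hg : g ∈ E)
    (F : Finset X) : (g • F \ F).card + F.card ≤ (insert 1 E • F).card := by
  rw [Finset.card_sdiff_add_card]
  refine Finset.card_le_card (Finset.union_subset
    (Finset.smul_finset_subset_smul (Finset.mem_insert_of_mem hg)) ?_)
  simpa using Finset.smul_finset_subset_smul (t := F) (Finset.mem_insert_self 1 E)

lemma abs_sum_comp_smul_sub_sum_le (F : Finset X) (g : G) {f : X → ℝ} {C : ℝ}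
    (hC : ∀ x, |f x| ≤ C) :
    |∑ x ∈ F, f (g • x) - ∑ x ∈ F, f x| ≤ 2 * C * (g • F \ F).card := by
  have hsum : ∑ x ∈ F, f (g • x) = ∑ y ∈ g • F, f y := by
    rw [Finset.smul_finset_def, Finset.sum_image fun x _ y _ h => MulAction.injective g h]
  have hcard : (F \ g • F).card = (g • F \ F).card :=
    Finset.card_sdiff_comm (Finset.card_smul_finset g F).symm
  rw [hsum, ← Finset.sum_sdiff_sub_sum_sdiff]
  calc _ ≤ |∑ y ∈ g • F \ F, f y| + |∑ y ∈ F \ g • F, f y| := abs_sub _ _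
    _ ≤ (g • F \ F).card * C + (F \ g • F).card * C :=
        add_le_add (abs_sum_le_card_mul hC) (abs_sum_le_card_mul hC)
    _ = 2 * C * (g • F \ F).card := by rw [hcard]; ring

end FinsetSMul

namespace BddFns

variable {X : Type*}

noncomputable def indicator (A : Set X) : BddFns X :=
  ⟨A.indicator 1, 1, fun x => by by_cases hx : x ∈ A <;> simp [hx]⟩

@[simp]
lemma coe_indicator (A : Set X) : (indicator A : X → ℝ) = A.indicator 1 := rfl

lemma sum_indicator {ι : Type*} (s : Finset ι) (A : ι → Set X)
    (hA : (s : Set ι).PairwiseDisjoint A) :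
    ∑ i ∈ s, indicator (A i) = indicator (⋃ i ∈ s, A i) := by
  ext x
  simp [Finset.indicator_biUnion_apply s A hA]

noncomputable def average (F : Finset X) : BddFns X →ₗ[ℝ] ℝ where
  toFun f := 𝔼 x ∈ F, (f : X → ℝ) x
  map_add' _ _ := Finset.expect_add_distrib F _ _
  map_smul' c _ := (Finset.mul_expect F _ c).symm

lemma average_apply (F : Finset X) (f : BddFns X) :
    average F f = 𝔼 x ∈ F, (f : X → ℝ) x := rfl

lemma abs_average_le {F : Finset X} (hF : F.Nonempty) {f : BddFns X} {C : ℝ}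
    (hC : ∀ x, |(f : X → ℝ) x| ≤ C) : |average F f| ≤ C :=
  (Finset.abs_expect_le _ _).trans (Finset.expect_le hF fun x _ => hC x)

lemma abs_average_sub_le {G : Type*} [Group G] [MulAction G X] [DecidableEq X] [DecidableEq G]
    {F : Finset X} (hF : F.Nonempty) {E : Finset G} {g : G} (hg : g ∈ E) {ε : ℝ}
    (hE : ((insert 1 E • F).card : ℝ) ≤ (1 + ε) * F.card)
    {f f' : BddFns X} {C : ℝ} (hC : ∀ x, |(f : X → ℝ) x| ≤ C)
    (hf' : ∀ x, (f' : X → ℝ) x = (f : X → ℝ) (g • x)) :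
    |average F f' - average F f| ≤ 2 * C * ε := by
  have hC0 : 0 ≤ C := (abs_nonneg _).trans (hC hF.choose)
  have hF0 : (0 : ℝ) < F.card := by exact_mod_cast hF.card_pos
  have hsdiff : ((g • F \ F).card : ℝ) ≤ ε * F.card := by
    have : ((g • F \ F).card : ℝ) + F.card ≤ (insert 1 E • F).card := by
      exact_mod_cast card_smul_finset_sdiff_add_card_le hg F
    linarith
  rw [average_apply, average_apply, Finset.expect_eq_sum_div_card, Finset.expect_eq_sum_div_card,
    ← sub_div, abs_div, abs_of_pos hF0, div_le_iff₀ hF0]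
  simp only [hf']
  calc _ ≤ 2 * C * (g • F \ F).card := abs_sum_comp_smul_sub_sum_le F g hC
    _ ≤ 2 * C * (ε * F.card) := by gcongr
    _ = _ := by ring

end BddFns

open BddFns

theorem exists_linearMap_forall_tendsto {ι M : Type*} [AddCommGroup M] [Module ℝ M]
    (U : Ultrafilter ι) (m : ι → M →ₗ[ℝ] ℝ) (hm : ∀ v, ∃ C, ∀ i, |m i v| ≤ C) :
    ∃ μ : M →ₗ[ℝ] ℝ, ∀ v, Tendsto (fun i => m i v) U (𝓝 (μ v)) := by
  have hlim : ∀ v, ∃ a, Tendsto (fun i => m i v) U (𝓝 a) := by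
    intro v
    obtain ⟨C, hC⟩ := hm v
    have hIcc : (fun i => m i v) ⁻¹' Set.Icc (-C) C ∈ U :=
      Filter.univ_mem' fun i => abs_le.1 (hC i)
    obtain ⟨a, -, ha⟩ :=
      isCompact_Icc.ultrafilter_le_nhds (U.map fun i => m i v) (le_principal_iff.2 hIcc)
    exact ⟨a, ha⟩
  choose μ hμ using hlim
  exact ⟨{ toFun := μ
           map_add' := fun v w =>
             tendsto_nhds_unique (hμ (v + w)) (by simpa using (hμ v).add (hμ w))
           map_smul' := fun c v =>
             tendsto_nhds_unique (hμ (c • v)) (by simpa using (hμ v).const_mul c) }, hμ⟩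

structure IsInvariantMean (G : Type*) {X : Type*} [SMul G X] (μ : BddFns X →ₗ[ℝ] ℝ) :
    Prop where
  nonneg : ∀ f : BddFns X, (∀ x, 0 ≤ (f : X → ℝ) x) → 0 ≤ μ f
  map_eq_one : ∀ f : BddFns X, (∀ x, (f : X → ℝ) x = 1) → μ f = 1
  map_eq_of_comp_smul : ∀ (g : G) (f f' : BddFns X),
    (∀ x, (f' : X → ℝ) x = (f : X → ℝ) (g • x)) → μ f' = μ f

namespace IsInvariantMean

variable {G X : Type*} [Group G] [MulAction G X] {μ : BddFns X →ₗ[ℝ] ℝ}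

lemma map_indicator_univ (hμ : IsInvariantMean G μ) : μ (indicator Set.univ) = 1 :=
  hμ.map_eq_one _ fun x => by simp

lemma map_indicator_le_one (hμ : IsInvariantMean G μ) (A : Set X) : μ (indicator A) ≤ 1 := by
  have hsum : indicator A + indicator Aᶜ = indicator Set.univ := by
    ext x
    simp [Set.indicator_self_add_compl_apply]
  have := hμ.nonneg (indicator Aᶜ) fun x => Set.indicator_nonneg (fun _ _ => zero_le_one) x
  linarith [congrArg μ hsum, map_add μ (indicator A) (indicator Aᶜ), hμ.map_indicator_univ]

lemma map_indicator_smul (hμ : IsInvariantMean G μ) (g : G) (A : Set X) :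
    μ (indicator (g • A)) = μ (indicator A) :=
  (hμ.map_eq_of_comp_smul g _ _ fun x => by
    classical
    simp only [coe_indicator, Set.indicator_apply, Set.smul_mem_smul_set_iff, Pi.one_apply]).symm

lemma sum_map_indicator_preimage (hμ : IsInvariantMean G μ) {E : Finset G} {c : X → G}
    (hc : ∀ x, c x ∈ E) : ∑ g ∈ E, μ (indicator (c ⁻¹' {g})) = 1 := by
  rw [← map_sum, sum_indicator E _ (Set.pairwiseDisjoint_fiber c _)]
  convert hμ.map_indicator_univ
  ext x
  simpa using hc x

theorem card_le_one_of_injective (hμ : IsInvariantMean G μ) {ι : Type*} [Fintype ι]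
    {E : Finset G} {c : ι × X → G} (hc : ∀ p, c p ∈ E) (hinj : Injective fun p => c p • p.2) :
    Fintype.card ι ≤ 1 := by
  classical
  let piece : ι × G → Set X := fun q => q.2 • (fun x => c (q.1, x)) ⁻¹' {q.2}
  have hdisj : ((Finset.univ ×ˢ E : Finset (ι × G)) : Set (ι × G)).PairwiseDisjoint piece := by
    rintro ⟨i, g⟩ - ⟨i', g'⟩ - hne
    refine Set.disjoint_left.2 ?_
    rintro _ ⟨x, hx, rfl⟩ ⟨x', hx', hxx'⟩
    have hx : c (i, x) = g := hx
    have hx' : c (i', x') = g' := hx'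
    obtain ⟨rfl, rfl⟩ := Prod.ext_iff.1 (@hinj (i', x') (i, x) (by simp only [hx, hx', hxx']))
    exact hne (by rw [← hx, ← hx'])
  have hsum : ∑ q ∈ Finset.univ ×ˢ E, μ (indicator (piece q)) = Fintype.card ι := by
    rw [Finset.sum_product]
    simp [piece, hμ.map_indicator_smul, hμ.sum_map_indicator_preimage fun x => hc (_, x)]
  have := hμ.map_indicator_le_one (⋃ q ∈ Finset.univ ×ˢ E, piece q)
  rw [← sum_indicator _ _ hdisj, map_sum, hsum] at this
  exact_mod_cast this

end IsInvariantMean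

section Amenability

variable {G X : Type*} [Group G] [MulAction G X] [DecidableEq X]

theorem IsInvariantMean.exists_card_smul_le [DecidableEq G] {μ : BddFns X →ₗ[ℝ] ℝ}
    (hμ : IsInvariantMean G μ) {θ : ℝ} (hθ : 1 < θ) (E : Finset G) :
    ∃ F : Finset X, F.Nonempty ∧ ((E • F).card : ℝ) ≤ θ * F.card := by
  by_contra! hexp
  have hexp' : ∀ F : Finset X, θ * F.card ≤ (E • F).card := by
    intro F
    rcases F.eq_empty_or_nonempty with rfl | hF
    · simp
    · exact (hexp F hF).le
  obtain ⟨n, hn⟩ := pow_unbounded_of_one_lt (2 : ℝ) hθ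
  have hdouble : ∀ F : Finset X, Fintype.card Bool * F.card ≤ (E ^ n • F).card := by
    intro F
    have := pow_mul_card_le_card_pow_smul (by linarith) hexp' n F
    have : (2 : ℝ) * F.card ≤ (E ^ n • F).card := by
      nlinarith [(F.card.cast_nonneg : (0 : ℝ) ≤ F.card)]
    simpa using (by exact_mod_cast this : 2 * F.card ≤ (E ^ n • F).card)
  obtain ⟨c, hcE, hinj⟩ := exists_injective_smul_of_card_mul_le hdouble
  simpa using hμ.card_le_one_of_injective hcE hinj

theorem exists_isInvariantMean_of_forall_exists_card_smul_le
    (h : ∀ θ : ℝ, 1 < θ → ∀ E : Finset G,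
      ∃ F : Finset X, F.Nonempty ∧ ((E • F).card : ℝ) ≤ θ * F.card) :
    ∃ μ : BddFns X →ₗ[ℝ] ℝ, IsInvariantMean G μ := by
  classical
  choose F hFne hF using fun i : ℕ × Finset G =>
    h (1 + 1 / (i.1 + 1)) (lt_add_of_pos_right _ (by positivity)) (insert 1 i.2)
  obtain ⟨μ, hμ⟩ := exists_linearMap_forall_tendsto (Ultrafilter.of atTop)
    (fun i => average (F i)) fun f => f.2.imp fun C hC i => abs_average_le (hFne i) hC
  refine ⟨μ, ⟨fun f hf => ge_of_tendsto' (hμ f) fun i => Finset.expect_nonneg fun x _ => hf x,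
    fun f hf => tendsto_nhds_unique (hμ f) ?_, fun g f f' hf' => ?_⟩⟩
  · simp [average_apply, hf, hFne]
  obtain ⟨C, hC⟩ := f.2
  have hbound : Tendsto (fun i : ℕ × Finset G => 2 * C * (1 / ((i.1 : ℝ) + 1))) atTop (𝓝 0) := by
    have := (tendsto_one_div_add_atTop_nhds_zero_nat.const_mul (2 * C)).comp
      (tendsto_atTop_atTop_of_monotone monotone_fst fun n => ⟨(n, (∅ : Finset G)), le_rfl⟩)
    rwa [mul_zero] at this
  have hsmall : Tendsto (fun i => average (F i) f' - average (F i) f) atTop (𝓝 0) := by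
    refine squeeze_zero_norm' ?_ hbound
    filter_upwards [eventually_ge_atTop (0, {g})] with i hi
    simpa using abs_average_sub_le (hFne i) (hi.2 (Finset.mem_singleton_self g)) (hF i) hC hf'
  have := tendsto_nhds_unique ((hμ f').sub (hμ f)) (hsmall.mono_left (Ultrafilter.of_le _))
  linarith

end Amenability

theorem stmt_3_general {G X : Type*} [Group G] [MulAction G X] :
    (∃ μ : ↥(BddFns X) →ₗ[ℝ] ℝ,
        (∀ f : ↥(BddFns X), (∀ x : X, 0 ≤ (f : X → ℝ) x) → 0 ≤ μ f) ∧
        (∀ f : ↥(BddFns X), (∀ x : X, (f : X → ℝ) x = 1) → μ f = 1) ∧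
        (∀ (g : G) (f f' : ↥(BddFns X)),
          (∀ x : X, (f' : X → ℝ) x = (f : X → ℝ) (g • x)) → μ f' = μ f)) ↔
      (∀ θ : ℝ, 1 < θ → ∀ E : Finset G, ∃ F : Finset X, F.Nonempty ∧
        ({z : X | ∃ g ∈ E, ∃ x ∈ F, g • x = z}.ncard : ℝ) ≤ θ * (F.card : ℝ)) := by
  classical
  simp only [ncard_setOf_exists_smul_eq]
  constructor
  · rintro ⟨μ, hμ⟩ θ hθ E
    exact IsInvariantMean.exists_card_smul_le ⟨hμ.1, hμ.2.1, hμ.2.2⟩ hθ E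
  · intro h
    obtain ⟨μ, hμ⟩ := exists_isInvariantMean_of_forall_exists_card_smul_le h
    exact ⟨μ, hμ.nonneg, hμ.map_eq_one, hμ.map_eq_of_comp_smul⟩

/-- Rosenblatt. An action of a group `G` on a nonempty set `X` is
amenable (i.e. `ℓ∞(X)` admits a `G`-invariant mean) if and only if it satisfies the
Følner-type condition. -/
theorem stmt_3 {G X : Type*} [Group G] [MulAction G X] [Nonempty X] :
    (∃ μ : ↥(BddFns X) →ₗ[ℝ] ℝ,
        (∀ f : ↥(BddFns X), (∀ x : X, 0 ≤ (f : X → ℝ) x) → 0 ≤ μ f) ∧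
        (∀ f : ↥(BddFns X), (∀ x : X, (f : X → ℝ) x = 1) → μ f = 1) ∧
        (∀ (g : G) (f f' : ↥(BddFns X)),
          (∀ x : X, (f' : X → ℝ) x = (f : X → ℝ) (g • x)) → μ f' = μ f)) ↔
      (∀ θ : ℝ, 1 < θ → ∀ E : Finset G, ∃ F : Finset X, F.Nonempty ∧
        ({z : X | ∃ g ∈ E, ∃ x ∈ F, g • x = z}.ncard : ℝ) ≤ θ * (F.card : ℝ)) :=
  stmt_3_general
end

section
/- Let H be a subgroup of a locally compact Hausdorff topological group G (with the subspace topology on H), and consider the action of G on the set G/H of left cosets of H given by g·(xH) = (gx)H. If there exists a G-invariant mean μ on ℓ∞(G/H) and there exists a left-invariant mean ν on C_b(H), then there exists a left-invariant mean ξ on C_b(G); in particular, G is amenable. -/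
/-- A topological group is amenable if there is a left-invariant mean on the space
`C_b(G)` of bounded continuous real-valued functions on `G`. -/
def IsLCAmenable (G : Type*) [Group G] [TopologicalSpace G] : Prop :=
  ∃ μ : BoundedContinuousFunction G ℝ →ₗ[ℝ] ℝ,
    (∀ f : BoundedContinuousFunction G ℝ, (∀ x : G, 0 ≤ f x) → 0 ≤ μ f) ∧
    μ 1 = 1 ∧
    ∀ (g : G) (f f' : BoundedContinuousFunction G ℝ),
      (∀ x : G, f' x = f (g * x)) → μ f' = μ f

/-!
Average a bounded continuous function `f` on `G` over each coset `xH` with the invariant mean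
`ν` of `H`, i.e. apply `ν` to `h ↦ f (x * h)`. Left invariance of `ν` makes the result depend
only on the coset, and positivity bounds it by `‖f‖`, so it is an element of `ℓ∞(G/H)`.
Applying `μ` gives a mean on `C_b(G)`; left translation of `f` by `g` translates the averaged
function by `g` on `G/H`, so `G`-invariance of `μ` makes this mean left invariant.
-/

open BoundedContinuousFunction

structure IsMean {X : Type*} [TopologicalSpace X] (ν : (X →ᵇ ℝ) →ₗ[ℝ] ℝ) : Prop where
  nonneg : ∀ f : X →ᵇ ℝ, (∀ x, 0 ≤ f x) → 0 ≤ ν f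
  map_one : ν 1 = 1

structure IsLeftInvariantMean {G : Type*} [Group G] [TopologicalSpace G]
    (ν : (G →ᵇ ℝ) →ₗ[ℝ] ℝ) : Prop extends IsMean ν where
  map_comp_mul_left : ∀ (g : G) (f f' : G →ᵇ ℝ), (∀ x, f' x = f (g * x)) → ν f' = ν f

theorem isLCAmenable_iff_exists_isLeftInvariantMean {G : Type*} [Group G] [TopologicalSpace G] :
    IsLCAmenable G ↔ ∃ ν : (G →ᵇ ℝ) →ₗ[ℝ] ℝ, IsLeftInvariantMean ν :=
  ⟨fun ⟨ν, hpos, hone, hinv⟩ => ⟨ν, ⟨hpos, hone⟩, hinv⟩,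
    fun ⟨ν, ⟨hpos, hone⟩, hinv⟩ => ⟨ν, hpos, hone, hinv⟩⟩

namespace IsMean

variable {X : Type*} [TopologicalSpace X] {ν : (X →ᵇ ℝ) →ₗ[ℝ] ℝ}

theorem mono (hν : IsMean ν) {f g : X →ᵇ ℝ} (h : ∀ x, f x ≤ g x) : ν f ≤ ν g := by
  have := hν.nonneg (g - f) fun x => sub_nonneg.mpr (h x)
  rwa [map_sub, sub_nonneg] at this

theorem map_const (hν : IsMean ν) (c : ℝ) : ν (const X c) = c := by
  have : const X c = c • (1 : X →ᵇ ℝ) := by ext; simp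
  rw [this, map_smul, hν.map_one, smul_eq_mul, mul_one]

theorem abs_apply_le (hν : IsMean ν) {f : X →ᵇ ℝ} {C : ℝ} (h : ∀ x, |f x| ≤ C) : |ν f| ≤ C := by
  rw [abs_le]
  constructor
  · simpa [hν.map_const] using hν.mono (f := const X (-C)) fun x => (abs_le.mp (h x)).1
  · simpa [hν.map_const] using hν.mono (g := const X C) fun x => (abs_le.mp (h x)).2

end IsMean

section Coset

variable {G : Type*} [Group G] [TopologicalSpace G] [SeparatelyContinuousMul G] (H : Subgroup G)

noncomputable def restrictCoset (x : G) : (G →ᵇ ℝ) →ₗ[ℝ] (H →ᵇ ℝ) :=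
  compContinuousCLM ℝ ℝ ⟨fun h : H => x * h, by fun_prop⟩

@[simp]
theorem restrictCoset_apply (x : G) (f : G →ᵇ ℝ) (h : H) : restrictCoset H x f h = f (x * h) :=
  rfl

@[simp]
theorem restrictCoset_one (x : G) : restrictCoset H x 1 = 1 := rfl

theorem IsLeftInvariantMean.map_restrictCoset_mul {ν : (H →ᵇ ℝ) →ₗ[ℝ] ℝ}
    (hν : IsLeftInvariantMean ν) (x : G) (h : H) (f : G →ᵇ ℝ) :
    ν (restrictCoset H (x * h) f) = ν (restrictCoset H x f) :=
  hν.map_comp_mul_left h _ _ fun k => by simp [mul_assoc]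

/-- Uses the representative `z.out`, so that linearity is definitional; by `cosetAverage_mk`
the value does not depend on this choice when `ν` is left invariant. -/
noncomputable def cosetAverage (ν : (H →ᵇ ℝ) →ₗ[ℝ] ℝ) : (G →ᵇ ℝ) →ₗ[ℝ] (G ⧸ H → ℝ) :=
  LinearMap.pi fun z => ν ∘ₗ restrictCoset H z.out

theorem cosetAverage_mk {ν : (H →ᵇ ℝ) →ₗ[ℝ] ℝ} (hν : IsLeftInvariantMean ν) (f : G →ᵇ ℝ)
    (x : G) :
    cosetAverage H ν f x = ν (restrictCoset H x f) := by
  obtain ⟨h, hx⟩ := QuotientGroup.mk_out_eq_mul H x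
  simp only [cosetAverage, LinearMap.pi_apply, LinearMap.comp_apply, hx,
    hν.map_restrictCoset_mul]

theorem cosetAverage_mem_bddFns {ν : (H →ᵇ ℝ) →ₗ[ℝ] ℝ} (hν : IsMean ν) (f : G →ᵇ ℝ) :
    cosetAverage H ν f ∈ BddFns (G ⧸ H) :=
  ⟨‖f‖, fun _ => hν.abs_apply_le fun _ =>
    (Real.norm_eq_abs _).symm.trans_le (f.norm_coe_le_norm _)⟩

theorem cosetAverage_of_comp_mul_left {ν : (H →ᵇ ℝ) →ₗ[ℝ] ℝ} (hν : IsLeftInvariantMean ν)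
    {g : G} {f f' : G →ᵇ ℝ} (hf : ∀ x, f' x = f (g * x)) (z : G ⧸ H) :
    cosetAverage H ν f' z = cosetAverage H ν f (g • z) := by
  induction z using QuotientGroup.induction_on with
  | H x =>
    rw [MulAction.Quotient.smul_mk, cosetAverage_mk H hν, cosetAverage_mk H hν]
    congr 1
    ext h
    simp [hf, mul_assoc]

end Coset

theorem stmt_8_general {G : Type*} [Group G] [TopologicalSpace G] [IsTopologicalGroup G]
    (H : Subgroup G)
    (hμ : ∃ μ : ↥(BddFns (G ⧸ H)) →ₗ[ℝ] ℝ,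
      (∀ f : ↥(BddFns (G ⧸ H)), (∀ z : G ⧸ H, 0 ≤ (f : (G ⧸ H) → ℝ) z) → 0 ≤ μ f) ∧
      (∀ f : ↥(BddFns (G ⧸ H)), (∀ z : G ⧸ H, (f : (G ⧸ H) → ℝ) z = 1) → μ f = 1) ∧
      (∀ (g : G) (f f' : ↥(BddFns (G ⧸ H))),
        (∀ z : G ⧸ H, (f' : (G ⧸ H) → ℝ) z = (f : (G ⧸ H) → ℝ) (g • z)) → μ f' = μ f))
    (hν : IsLCAmenable ↥H) :
    IsLCAmenable G := by
  obtain ⟨μ, μ_nonneg, μ_one, μ_inv⟩ := hμ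
  obtain ⟨ν, hν⟩ := isLCAmenable_iff_exists_isLeftInvariantMean.mp hν
  refine ⟨μ ∘ₗ (cosetAverage H ν).codRestrict _ (cosetAverage_mem_bddFns H hν.toIsMean),
    fun f hf => μ_nonneg _ fun z => hν.nonneg _ fun _ => hf _,
    μ_one _ fun z => ?_,
    fun g f f' hf => μ_inv g _ _ (cosetAverage_of_comp_mul_left H hν hf)⟩
  simp [cosetAverage, hν.map_one]

/-- If `H ≤ G`, the `G`-action on `G/H` admits an invariant mean on
`ℓ∞(G/H)`, and `H` (with the subspace topology) is amenable, then `G` is amenable. -/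
theorem stmt_8 {G : Type*} [Group G] [TopologicalSpace G] [IsTopologicalGroup G]
    [LocallyCompactSpace G] [T2Space G] (H : Subgroup G)
    (hμ : ∃ μ : ↥(BddFns (G ⧸ H)) →ₗ[ℝ] ℝ,
      (∀ f : ↥(BddFns (G ⧸ H)), (∀ z : G ⧸ H, 0 ≤ (f : (G ⧸ H) → ℝ) z) → 0 ≤ μ f) ∧
      (∀ f : ↥(BddFns (G ⧸ H)), (∀ z : G ⧸ H, (f : (G ⧸ H) → ℝ) z = 1) → μ f = 1) ∧
      (∀ (g : G) (f f' : ↥(BddFns (G ⧸ H))),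
        (∀ z : G ⧸ H, (f' : (G ⧸ H) → ℝ) z = (f : (G ⧸ H) → ℝ) (g • z)) → μ f' = μ f))
    (hν : IsLCAmenable ↥H) :
    IsLCAmenable G :=
  stmt_8_general H hμ hν
end

section
/- Let G be a locally compact Hausdorff topological group with left Haar measure λ, and let μ be a positive linear functional on the space of bounded Borel measurable functions f : G → ℝ such that μ(1) = 1 and μ(f) = μ(f') whenever f = f' λ-almost everywhere. Then μ satisfies μ(f ∘ λ_g) = μ(f) for all bounded Borel functions f and all g ∈ G (where λ_g(x) = g·x) if and only if μ satisfies μ(f ∘ α) = μ(f) for all bounded Borel functions f and all Borel piecewise translations α of G. -/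
/-!
Restricting `f'` to the pieces `P` of the partition and `f` to their images `α '' P = g_P • P`
writes `f'` and `f` as finite sums whose corresponding terms differ by the left translation
by `g_P`, so a linear, left-invariant `μ` takes the same value on both. Conversely a left
translation is a piecewise translation with the single piece `G`.
-/

open MeasureTheory

/-- The space of bounded Borel measurable real-valued functions on `G`, as a submodule
of `G → ℝ`. -/
def BddBorel (G : Type*) [MeasurableSpace G] : Submodule ℝ (G → ℝ) where
  carrier := {f : G → ℝ | Measurable f ∧ ∃ C : ℝ, ∀ x : G, |f x| ≤ C}
  add_mem' := by
    rintro f g ⟨hf, C, hC⟩ ⟨hg, D, hD⟩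
    exact ⟨hf.add hg, C + D, fun x => (abs_add_le _ _).trans (add_le_add (hC x) (hD x))⟩
  zero_mem' := ⟨measurable_const, 0, fun x => by simp⟩
  smul_mem' := by
    rintro c f ⟨hf, C, hC⟩
    refine ⟨hf.const_smul c, |c| * C, fun x => ?_⟩
    rw [Pi.smul_apply, smul_eq_mul, abs_mul]
    exact mul_le_mul_of_nonneg_left (hC x) (abs_nonneg c)

/-- A bijection `α : G → G` is a Borel piecewise translation if there is a finite
partition of `G` into Borel sets on each of which `α` agrees with a left translation. -/
def IsBorelPiecewiseTranslation {G : Type*} [Group G] [MeasurableSpace G]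
    (α : Equiv.Perm G) : Prop :=
  ∃ 𝓟 : Finset (Set G),
    (∀ P ∈ 𝓟, MeasurableSet P) ∧
    (∀ x : G, ∃! P : Set G, P ∈ 𝓟 ∧ x ∈ P) ∧
    (∀ P ∈ 𝓟, ∃ g : G, ∀ x ∈ P, α x = g * x)

open scoped Pointwise

theorem Finset.sum_indicator_eq_of_existsUnique {X ι M : Type*} [Fintype ι] [AddCommMonoid M]
    {A : ι → Set X} (hA : ∀ x, ∃! i, x ∈ A i) (f : X → M) :
    ∑ i, (A i).indicator f = f := by
  classical
  funext x
  obtain ⟨i, hi, huniq⟩ := hA x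
  rw [Finset.sum_apply, Finset.sum_eq_single_of_mem i (Finset.mem_univ i)
    fun j _ hji => Set.indicator_of_notMem (fun hj => hji (huniq j hj)) f]
  exact Set.indicator_of_mem hi f

namespace BddBorel

variable {X : Type*} [MeasurableSpace X]

theorem indicator_mem {f : X → ℝ} (hf : f ∈ BddBorel X) {s : Set X} (hs : MeasurableSet s) :
    s.indicator f ∈ BddBorel X := by
  obtain ⟨hfm, C, hC⟩ := hf
  refine ⟨hfm.indicator hs, max C 0, fun x => ?_⟩
  by_cases hx : x ∈ s
  · simpa [hx] using (hC x).trans (le_max_left C 0)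
  · simp [hx]

noncomputable def indicator {s : Set X} (hs : MeasurableSet s) (f : BddBorel X) : BddBorel X :=
  ⟨s.indicator f, indicator_mem f.2 hs⟩

@[simp]
theorem coe_indicator {s : Set X} (hs : MeasurableSet s) (f : BddBorel X) :
    (indicator hs f : X → ℝ) = s.indicator f :=
  rfl

theorem eq_sum_indicator {ι : Type*} [Fintype ι] {A : ι → Set X} (hA : ∀ i, MeasurableSet (A i))
    (hpart : ∀ x, ∃! i, x ∈ A i) (f : BddBorel X) :
    f = ∑ i, indicator (hA i) f := by
  ext1
  simp [Finset.sum_indicator_eq_of_existsUnique hpart]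

end BddBorel

section PiecewiseTranslation

variable {G : Type*} [Group G] [MeasurableSpace G]

theorem isBorelPiecewiseTranslation_mulLeft (g : G) :
    IsBorelPiecewiseTranslation (Equiv.mulLeft g) :=
  ⟨{Set.univ}, by simp, fun x => ⟨Set.univ, by simp, fun P hP => by simpa using hP.1⟩,
    fun P _ => ⟨g, fun _ _ => rfl⟩⟩

def IsLeftInvariant (μ : BddBorel G →ₗ[ℝ] ℝ) : Prop :=
  ∀ (g : G) (f f' : BddBorel G), (∀ x, (f' : G → ℝ) x = (f : G → ℝ) (g * x)) → μ f' = μ f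

theorem map_indicator_eq_map_indicator_smul {μ : BddBorel G →ₗ[ℝ] ℝ} (hL : IsLeftInvariant μ)
    {s : Set G} (hs : MeasurableSet s) {g : G} (hgs : MeasurableSet (g • s))
    {f f' : BddBorel G} (hff' : ∀ x ∈ s, (f' : G → ℝ) x = (f : G → ℝ) (g * x)) :
    μ (BddBorel.indicator hs f') = μ (BddBorel.indicator hgs f) := by
  refine hL g _ _ fun x => ?_
  by_cases hx : x ∈ s
  · have hgx : g * x ∈ g • s := Set.smul_mem_smul_set hx
    simp [hx, hgx, hff' x hx]
  · have hgx : g * x ∉ g • s := fun h => hx (Set.smul_mem_smul_set_iff.1 h)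
    simp [hx, hgx]

theorem map_eq_of_isBorelPiecewiseTranslation [MeasurableMul G]
    {μ : BddBorel G →ₗ[ℝ] ℝ} (hL : IsLeftInvariant μ)
    {α : Equiv.Perm G} (hα : IsBorelPiecewiseTranslation α)
    {f f' : BddBorel G} (hff' : ∀ x, (f' : G → ℝ) x = (f : G → ℝ) (α x)) :
    μ f' = μ f := by
  obtain ⟨𝓟, hmeas, hpart, htrans⟩ := hα
  choose! g hg using htrans
  have hP : ∀ P : 𝓟, MeasurableSet (P : Set G) := fun P => hmeas P P.2
  have hgP : ∀ P : 𝓟, MeasurableSet (g P • (P : Set G)) := fun P => (hP P).const_smul _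
  have hpart' : ∀ x, ∃! P : 𝓟, x ∈ (P : Set G) := fun x => by
    obtain ⟨P, ⟨hP𝓟, hxP⟩, huniq⟩ := hpart x
    exact ⟨⟨P, hP𝓟⟩, hxP, fun Q hxQ => Subtype.ext (huniq Q ⟨Q.2, hxQ⟩)⟩
  have himage : ∀ P : 𝓟, α '' (P : Set G) = g P • (P : Set G) := fun P =>
    Set.EqOn.image_eq (hg P P.2)
  have hpart_image : ∀ y, ∃! P : 𝓟, y ∈ g P • (P : Set G) := fun y => by
    simpa only [← himage, Set.mem_image_equiv] using hpart' (α.symm y)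
  rw [BddBorel.eq_sum_indicator hP hpart' f', BddBorel.eq_sum_indicator hgP hpart_image f,
    map_sum, map_sum]
  refine Finset.sum_congr rfl fun P _ => map_indicator_eq_map_indicator_smul hL _ _ ?_
  intro x hx
  rw [hff', hg P P.2 x hx]

end PiecewiseTranslation

theorem stmt_9_general {G : Type*} [Group G] [TopologicalSpace G] [IsTopologicalGroup G]
    [MeasurableSpace G] [BorelSpace G]
    (μ : ↥(BddBorel G) →ₗ[ℝ] ℝ) :
    (∀ (g : G) (f f' : ↥(BddBorel G)),
        (∀ x : G, (f' : G → ℝ) x = (f : G → ℝ) (g * x)) → μ f' = μ f) ↔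
      (∀ α : Equiv.Perm G, IsBorelPiecewiseTranslation α →
        ∀ f f' : ↥(BddBorel G),
          (∀ x : G, (f' : G → ℝ) x = (f : G → ℝ) (α x)) → μ f' = μ f) :=
  ⟨fun hL _ hα _ _ hff' => map_eq_of_isBorelPiecewiseTranslation hL hα hff',
    fun h g f f' hff' => h _ (isBorelPiecewiseTranslation_mulLeft g) f f' hff'⟩

/-- A mean on `L∞(G)` (with respect to a left Haar measure) is
invariant under left translations if and only if it is invariant under all Borel
piecewise translations. -/
theorem stmt_9 {G : Type*} [Group G] [TopologicalSpace G] [IsTopologicalGroup G]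
    [LocallyCompactSpace G] [T2Space G] [MeasurableSpace G] [BorelSpace G]
    (lam : Measure G) [lam.IsHaarMeasure]
    (μ : ↥(BddBorel G) →ₗ[ℝ] ℝ)
    (hpos : ∀ f : ↥(BddBorel G), (∀ x : G, 0 ≤ (f : G → ℝ) x) → 0 ≤ μ f)
    (hone : ∀ f : ↥(BddBorel G), (∀ x : G, (f : G → ℝ) x = 1) → μ f = 1)
    (hae : ∀ f f' : ↥(BddBorel G),
      (∀ᵐ x ∂lam, (f : G → ℝ) x = (f' : G → ℝ) x) → μ f = μ f') :
    (∀ (g : G) (f f' : ↥(BddBorel G)),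
        (∀ x : G, (f' : G → ℝ) x = (f : G → ℝ) (g * x)) → μ f' = μ f) ↔
      (∀ α : Equiv.Perm G, IsBorelPiecewiseTranslation α →
        ∀ f f' : ↥(BddBorel G),
          (∀ x : G, (f' : G → ℝ) x = (f : G → ℝ) (α x)) → μ f' = μ f) :=
  stmt_9_general μ
end

section
/- Let F₂ be the free group on two generators a, b, let w ∈ F₂ with w ≠ e, and let M = {0, 1, …, 2|w|}, where |w| denotes the word length of w. Then there exists a group homomorphism φ : F₂ → Sym(M) such that φ(w) ≠ id and |φ(v)(i) − i| ≤ 2|v| for all i ∈ M and all v ∈ F₂. -/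
/-- The word length of an element of the free group on two generators: the smallest
`n` such that `w` can be represented by a word of length `n` in the generators and
their inverses. -/
noncomputable def wordLength (w : FreeGroup (Fin 2)) : ℕ :=
  sInf {n : ℕ | ∃ l : List (Fin 2 × Bool), l.length = n ∧ FreeGroup.mk l = w}

/-!
Write `w = c₁ ⋯ cₙ` as a reduced word and let `F₂` act on `{0, …, 2n}` so that the letter `cₜ`
sends `2t` to `2t - 2`; then `w` sends `2n` to `0`. For a generator `x`, let `σ t ∈ {1, -1, 0}`
say whether `cₜ` is `x`, `x⁻¹` or another letter. As the word is reduced, `σ` never jumps between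
`1` and `-1`, so the positions where `σ ≠ 0` form runs of constant sign, and `x` can be sent to a
product of disjoint cycles, one per run, that walk down the even points of the run and back up
through the odd points between them (or the reverse). Such a cycle moves every point by at most
`2`, hence `v` moves every point by at most `2|v|`.
-/

theorem List.prod_smul_eq_of_forall_getElem_smul {M X : Type*} [Monoid M] [MulAction M X]
    (g : List M) (pt : ℕ → X) (h : ∀ i (hi : i < g.length), g[i] • pt (i + 1) = pt i) :
    g.prod • pt g.length = pt 0 := by
  induction g generalizing pt with
  | nil => simp
  | cons a g ih =>
    rw [List.prod_cons, mul_smul, List.length_cons,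
      ih (fun j => pt (j + 1)) fun i hi => h (i + 1) (by simpa using hi)]
    exact h 0 (by simp)

theorem FreeGroup.abs_lift_smul_sub_le {α G X : Type*} [DecidableEq α] [Group G] [MulAction G X]
    (c : X → ℤ) (f : α → G) {d : ℤ} (hf : ∀ a x, |c (f a • x) - c x| ≤ d) (v : FreeGroup α)
    (x : X) : |c (lift f v • x) - c x| ≤ d * v.norm := by
  set g : α × Bool → G := fun a => cond a.2 (f a.1) (f a.1)⁻¹
  have hletter : ∀ a y, |c (g a • y) - c y| ≤ d := by
    rintro ⟨a, _ | _⟩ y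
    · simpa [g, abs_sub_comm] using hf a ((f a)⁻¹ • y)
    · exact hf a y
  have hword : ∀ (L : List (α × Bool)) y, |c ((L.map g).prod • y) - c y| ≤ d * L.length := by
    intro L y
    induction L with
    | nil => simp
    | cons a L ih =>
      calc |c (((a :: L).map g).prod • y) - c y|
          ≤ |c (g a • (L.map g).prod • y) - c ((L.map g).prod • y)|
            + |c ((L.map g).prod • y) - c y| := by
            simpa [mul_smul] using abs_sub_le _ (c ((L.map g).prod • y)) _
        _ ≤ d + d * L.length := add_le_add (hletter _ _) ih
        _ = d * (a :: L).length := by rw [List.length_cons]; push_cast; ring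
  simpa only [g, ← lift_mk, mk_toWord, norm] using hword v.toWord x

theorem wordLength_eq_norm (v : FreeGroup (Fin 2)) : wordLength v = v.norm :=
  le_antisymm (Nat.sInf_le ⟨v.toWord, rfl, FreeGroup.mk_toWord⟩)
    (le_csInf ⟨_, v.toWord, rfl, FreeGroup.mk_toWord⟩ fun _ ⟨_, hl, hv⟩ =>
      hl ▸ hv ▸ FreeGroup.norm_mk_le)

/-- On a maximal run `σ = 1` over the positions `s, …, e` this is the cycle
`2e ↦ 2e - 2 ↦ ⋯ ↦ 2s - 2 ↦ 2s - 1 ↦ 2s + 1 ↦ ⋯ ↦ 2e - 1 ↦ 2e`, on a run `σ = -1` the inverse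
cycle; points next to no run are fixed. Under `IsReducedSigns` these cycles are disjoint. -/
def zigzag (σ : ℕ → SignType) (p : ℕ) : ℕ :=
  if p % 2 = 0 then
    if σ (p / 2) = 1 then p - 2
    else if σ (p / 2 + 1) = -1 then p + 2
    else if σ (p / 2 + 1) = 1 then p + 1
    else if σ (p / 2) = -1 then p - 1
    else p
  else
    if σ (p / 2 + 1) = 1 then (if σ (p / 2 + 2) = 1 then p + 2 else p + 1)
    else if σ (p / 2 + 1) = -1 then (if σ (p / 2) = -1 then p - 2 else p - 1)
    else p

theorem zigzag_of_eq_two_mul {σ : ℕ → SignType} {p t : ℕ} (hp : p = 2 * t) :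
    zigzag σ p =
      if σ t = 1 then 2 * t - 2
      else if σ (t + 1) = -1 then 2 * t + 2
      else if σ (t + 1) = 1 then 2 * t + 1
      else if σ t = -1 then 2 * t - 1
      else 2 * t := by
  subst hp
  simp [zigzag]

theorem zigzag_of_eq_two_mul_add_one {σ : ℕ → SignType} {p t : ℕ} (hp : p = 2 * t + 1) :
    zigzag σ p =
      if σ (t + 1) = 1 then (if σ (t + 2) = 1 then 2 * t + 3 else 2 * t + 2)
      else if σ (t + 1) = -1 then (if σ t = -1 then 2 * t - 1 else 2 * t)
      else 2 * t + 1 := by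
  subst hp
  simp [zigzag, Nat.add_mod, Nat.add_div]

theorem zigzag_two_mul_add_two {σ : ℕ → SignType} {t : ℕ} (h : σ (t + 1) = 1) :
    zigzag σ (2 * t + 2) = 2 * t := by
  simp [zigzag_of_eq_two_mul (p := 2 * t + 2) (t := t + 1) (by omega), h, mul_add]

theorem abs_zigzag_sub_le (σ : ℕ → SignType) (p : ℕ) : |(zigzag σ p : ℤ) - p| ≤ 2 := by
  rw [abs_le]
  unfold zigzag
  split_ifs <;> omega

/-- The signs of the occurrences of one generator in a reduced word of length `n`. -/
structure IsReducedSigns (σ : ℕ → SignType) (n : ℕ) : Prop where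
  zero : σ 0 = 0
  eq_zero_of_lt : ∀ t, n < t → σ t = 0
  succ_ne_neg : ∀ t, σ t ≠ 0 → σ (t + 1) ≠ -σ t

namespace IsReducedSigns

variable {σ : ℕ → SignType} {n : ℕ}

theorem neg (h : IsReducedSigns σ n) : IsReducedSigns (-σ) n where
  zero := by simp [h.zero]
  eq_zero_of_lt t ht := by simp [h.eq_zero_of_lt t ht]
  succ_ne_neg t ht := by simpa [neg_eq_iff_eq_neg] using h.succ_ne_neg t (by simpa using ht)

theorem zigzag_lt (h : IsReducedSigns σ n) {p : ℕ} (hp : p < 2 * n + 1) :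
    zigzag σ p < 2 * n + 1 := by
  have hsupp : ∀ t, σ t ≠ 0 → t ≤ n := fun t ht => not_lt.1 (mt (h.eq_zero_of_lt t) ht)
  unfold zigzag
  split_ifs <;> first
    | omega
    | (have := hsupp (p / 2 + 1) (by simp [*]); omega)
    | (have := hsupp (p / 2 + 2) (by simp [*]); omega)

theorem zigzag_neg_zigzag (h : IsReducedSigns σ n) (p : ℕ) : zigzag (-σ) (zigzag σ p) = p := by
  have hpos : ∀ t, σ t = 1 → σ (t + 1) ≠ -1 := fun t ht => by simpa [ht] using h.succ_ne_neg t
  have hneg : ∀ t, σ t = -1 → σ (t + 1) ≠ 1 := fun t ht => by simpa [ht] using h.succ_ne_neg t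
  have h0 := h.zero
  obtain ⟨t, rfl | rfl⟩ := Nat.even_or_odd' p
  · rw [zigzag_of_eq_two_mul rfl]
    split_ifs with h1 h2 h3 h4
    · obtain ⟨s, rfl⟩ : ∃ s, t = s + 1 := Nat.exists_eq_succ_of_ne_zero (by rintro rfl; simp_all)
      rw [zigzag_of_eq_two_mul (t := s) (by omega)]
      have := hneg s
      simp_all [neg_eq_iff_eq_neg, mul_add]
    · rw [zigzag_of_eq_two_mul (t := t + 1) (by omega)]
      simp_all [mul_add]
    · rw [zigzag_of_eq_two_mul_add_one (t := t) (by omega)]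
      simp_all [neg_eq_iff_eq_neg]
    · obtain ⟨s, rfl⟩ : ∃ s, t = s + 1 := Nat.exists_eq_succ_of_ne_zero (by rintro rfl; simp_all)
      rw [zigzag_of_eq_two_mul_add_one (t := s) (by omega)]
      simp_all [neg_eq_iff_eq_neg, mul_add]
    · rw [zigzag_of_eq_two_mul (t := t) (by omega)]
      simp_all [neg_eq_iff_eq_neg]
  · rw [zigzag_of_eq_two_mul_add_one rfl]
    split_ifs with h1 h2 h3 h4
    · rw [zigzag_of_eq_two_mul_add_one (t := t + 1) (by omega)]
      simp_all [neg_eq_iff_eq_neg, mul_add]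
    · rw [zigzag_of_eq_two_mul (t := t + 1) (by omega)]
      simp_all [neg_eq_iff_eq_neg, mul_add]
    · obtain ⟨s, rfl⟩ : ∃ s, t = s + 1 := Nat.exists_eq_succ_of_ne_zero (by rintro rfl; simp_all)
      rw [zigzag_of_eq_two_mul_add_one (t := s) (by omega)]
      simp_all [neg_eq_iff_eq_neg, mul_add]
    · rw [zigzag_of_eq_two_mul (t := t) (by omega)]
      simp_all [neg_eq_iff_eq_neg]
    · rw [zigzag_of_eq_two_mul_add_one (t := t) (by omega)]
      simp_all [neg_eq_iff_eq_neg]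

def perm (h : IsReducedSigns σ n) : Equiv.Perm (Fin (2 * n + 1)) where
  toFun i := ⟨zigzag σ i, h.zigzag_lt i.2⟩
  invFun i := ⟨zigzag (-σ) i, h.neg.zigzag_lt i.2⟩
  left_inv i := Fin.ext (h.zigzag_neg_zigzag i)
  right_inv i := Fin.ext (by simpa using h.neg.zigzag_neg_zigzag i)

@[simp]
theorem perm_apply_val (h : IsReducedSigns σ n) (i : Fin (2 * n + 1)) :
    (h.perm i : ℕ) = zigzag σ i := rfl

@[simp]
theorem perm_symm_apply_val (h : IsReducedSigns σ n) (i : Fin (2 * n + 1)) :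
    (h.perm.symm i : ℕ) = zigzag (-σ) i := rfl

end IsReducedSigns

namespace FreeGroup

/-- `1`, `-1` or `0` as the `t`-th letter of `L`, counting from `1`, is `x`, `x⁻¹` or neither. -/
def letterSign {α : Type*} [DecidableEq α] (L : List (α × Bool)) (x : α) : ℕ → SignType
  | 0 => 0
  | t + 1 => if h : t < L.length then (if L[t].1 = x then cond L[t].2 1 (-1) else 0) else 0

theorem letterSign_getElem_fst {α : Type*} [DecidableEq α] {L : List (α × Bool)} {i : ℕ}
    (hi : i < L.length) : letterSign L L[i].1 (i + 1) = cond L[i].2 1 (-1) := by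
  simp [letterSign, hi]

namespace IsReduced

variable {α : Type*} [DecidableEq α] {L : List (α × Bool)}

theorem isReducedSigns_letterSign (hL : IsReduced L) (x : α) :
    IsReducedSigns (letterSign L x) L.length where
  zero := rfl
  eq_zero_of_lt t ht := by
    obtain ⟨s, rfl⟩ := Nat.exists_eq_succ_of_ne_zero (by omega : t ≠ 0)
    rw [letterSign, dif_neg (by omega)]
  succ_ne_neg t ht := by
    obtain ⟨s, rfl⟩ : ∃ s, t = s + 1 := Nat.exists_eq_succ_of_ne_zero (by rintro rfl; exact ht rfl)
    have hred := List.isChain_iff_getElem.1 hL s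
    simp only [letterSign] at ht ⊢
    split_ifs at ht ⊢ with h1 hx1 h2 hx2
    · rw [hred h1 (hx2.trans hx1.symm)]
      cases L[s + 1].2 <;> decide
    all_goals cases L[s].2 <;> simp_all

def toPerm (hL : IsReduced L) : FreeGroup α →* Equiv.Perm (Fin (2 * L.length + 1)) :=
  lift fun x => (hL.isReducedSigns_letterSign x).perm

theorem toPerm_of_getElem_apply (hL : IsReduced L) {i : ℕ} (hi : i < L.length) :
    cond L[i].2 (hL.toPerm (of L[i].1)) (hL.toPerm (of L[i].1))⁻¹ (Fin.ofNat _ (2 * (i + 1))) =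
      Fin.ofNat (2 * L.length + 1) (2 * i) := by
  have hsign := letterSign_getElem_fst hi
  have hsrc : 2 * (i + 1) % (2 * L.length + 1) = 2 * i + 2 := Nat.mod_eq_of_lt (by omega)
  have htgt : 2 * i % (2 * L.length + 1) = 2 * i := Nat.mod_eq_of_lt (by omega)
  apply Fin.ext
  cases hb : L[i].2 <;> simp only [hb, cond_true, cond_false] at hsign ⊢ <;>
    simp [toPerm, hsrc, htgt, zigzag_two_mul_add_two, hsign]

theorem toPerm_mk_apply (hL : IsReduced L) :
    hL.toPerm (mk L) (Fin.ofNat _ (2 * L.length)) = 0 := by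
  have h := List.prod_smul_eq_of_forall_getElem_smul
    (L.map fun c => cond c.2 (hL.toPerm (of c.1)) (hL.toPerm (of c.1))⁻¹)
    (fun j => Fin.ofNat (2 * L.length + 1) (2 * j))
    (fun i hi => by
      simpa [Equiv.Perm.smul_def] using hL.toPerm_of_getElem_apply (by simpa using hi))
  simpa [toPerm, lift_mk, Equiv.Perm.smul_def] using h

theorem abs_toPerm_apply_sub_le (hL : IsReduced L) (v : FreeGroup α)
    (i : Fin (2 * L.length + 1)) : |((hL.toPerm v i : ℕ) : ℤ) - (i : ℕ)| ≤ 2 * v.norm := by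
  have := abs_lift_smul_sub_le (fun i : Fin (2 * L.length + 1) => ((i : ℕ) : ℤ))
    (fun x => (hL.isReducedSigns_letterSign x).perm)
    (fun x j => by simpa [Equiv.Perm.smul_def] using abs_zigzag_sub_le (letterSign L x) j) v i
  simpa [toPerm, Equiv.Perm.smul_def] using this

end IsReduced

end FreeGroup

/-- For every non-identity `w ∈ F₂` there is a homomorphism
`φ : F₂ → Sym({0, …, 2|w|})` with `φ(w) ≠ id` and `|φ(v)(i) − i| ≤ 2|v|` for all
`i` and all `v ∈ F₂`. -/
theorem stmt_11 (w : FreeGroup (Fin 2)) (hw : w ≠ 1) :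
    ∃ φ : FreeGroup (Fin 2) →* Equiv.Perm (Fin (2 * wordLength w + 1)),
      φ w ≠ 1 ∧
      ∀ (v : FreeGroup (Fin 2)) (i : Fin (2 * wordLength w + 1)),
        |((φ v i : ℕ) : ℤ) - ((i : ℕ) : ℤ)| ≤ 2 * (wordLength v : ℤ) := by
  have hL : FreeGroup.IsReduced w.toWord := FreeGroup.isReduced_toWord
  have hpos : 0 < w.toWord.length := Nat.pos_of_ne_zero (mt FreeGroup.norm_eq_zero.1 hw)
  rw [wordLength_eq_norm, FreeGroup.norm]
  refine ⟨hL.toPerm, fun h => ?_, fun v i => wordLength_eq_norm v ▸ hL.abs_toPerm_apply_sub_le v i⟩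
  have h2n := hL.toPerm_mk_apply
  rw [FreeGroup.mk_toWord, h, Equiv.Perm.one_apply, Fin.ext_iff, Fin.val_ofNat, Fin.val_zero,
    Nat.mod_eq_of_lt (by omega)] at h2n
  omega
end

section
/- Let X be a metric space and let r ≥ 0. Suppose that for every integer ℓ ≥ 1 there exist points x₀, x₁, …, x_ℓ ∈ X with d(x_i, x_{i+1}) ≤ r for all i ∈ {0,…,ℓ−1} such that x₀ and x_ℓ cannot be joined by any chain y₀ = x₀, y₁, …, y_{ℓ−1} = x_ℓ of length ℓ−1 with d(y_j, y_{j+1}) ≤ r for all j (chains are allowed to repeat points). Then for every n ∈ ℕ and every finite subset F ⊆ X there exist pairwise distinct points x₀, x₁, …, x_n ∈ X with {x₀,…,x_n} ∩ F = ∅ and d(x_i, x_{i+1}) ≤ r for all i ∈ {0,…,n−1}. -/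
/-- Suppose for every `ℓ ≥ 1` there is an `r`-chain of length `ℓ`
whose endpoints cannot be joined by any `r`-chain of length `ℓ − 1`. Then for every `n`
and every finite set `F ⊆ X` there is an injective `r`-chain of length `n` avoiding `F`. -/
theorem stmt_14 {X : Type*} [MetricSpace X] (r : ℝ) (hr : 0 ≤ r)
    (h : ∀ ℓ : ℕ, 1 ≤ ℓ → ∃ x : ℕ → X,
      (∀ i < ℓ, dist (x i) (x (i + 1)) ≤ r) ∧
      ¬ ∃ y : ℕ → X, y 0 = x 0 ∧ y (ℓ - 1) = x ℓ ∧
          ∀ j < ℓ - 1, dist (y j) (y (j + 1)) ≤ r) :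
    ∀ (n : ℕ) (F : Set X), F.Finite → ∃ x : ℕ → X,
      (∀ i ≤ n, ∀ j ≤ n, i ≠ j → x i ≠ x j) ∧
      (∀ i ≤ n, x i ∉ F) ∧
      (∀ i < n, dist (x i) (x (i + 1)) ≤ r) := by
  classical
  intro n F hF
  set m := hF.toFinset.card with hm
  set L := (m + 1) * (n + 1) with hL
  have hLsum : (m + 1) * (n + 1) = (n + 1) * m + n + 1 := by ring
  have hL1 : 1 ≤ L := by omega
  obtain ⟨x, hchain, hnot⟩ := h L hL1
  -- the chain `x 0, ..., x L` has pairwise distinct points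
  have key : ∀ i j, i < j → j ≤ L → x i ≠ x j := by
    intro i j hij hjL hxy
    apply hnot
    set d := j - i with hd
    have hd1 : 1 ≤ d := by omega
    refine ⟨fun k => x (min L (if k ≤ i then k else k + d)), ?_, ?_, ?_⟩ <;> beta_reduce
    · have e1 : min L (if 0 ≤ i then 0 else 0 + d) = 0 := by
        rw [if_pos (Nat.zero_le i)]; omega
      rw [e1]
    · by_cases hcase : L - 1 ≤ i
      · have e1 : min L (if L - 1 ≤ i then L - 1 else L - 1 + d) = i := by
          rw [if_pos hcase]; omega
        rw [e1, hxy, show j = L by omega]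
      · have e1 : min L (if L - 1 ≤ i then L - 1 else L - 1 + d) = L := by
          rw [if_neg hcase]; omega
        rw [e1]
    · intro k hk
      beta_reduce
      rcases Nat.lt_or_ge k i with h1 | h1
      · have e1 : min L (if k ≤ i then k else k + d) = k := by
          rw [if_pos (by omega)]; omega
        have e2 : min L (if k + 1 ≤ i then k + 1 else k + 1 + d) = k + 1 := by
          rw [if_pos (by omega)]; omega
        rw [e1, e2]; exact hchain k (by omega)
      rcases Nat.eq_or_lt_of_le h1 with h2 | h2
      · -- k = i
        have e1 : min L (if k ≤ i then k else k + d) = i := by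
          rw [if_pos (by omega)]; omega
        rw [e1, hxy]
        by_cases h3 : j + 1 ≤ L
        · have e2 : min L (if k + 1 ≤ i then k + 1 else k + 1 + d) = j + 1 := by
            rw [if_neg (by omega)]; omega
          rw [e2]; exact hchain j (by omega)
        · have e2 : min L (if k + 1 ≤ i then k + 1 else k + 1 + d) = j := by
            rw [if_neg (by omega)]; omega
          rw [e2]; simpa using hr
      · -- i < k
        by_cases h3 : k + d < L
        · have e1 : min L (if k ≤ i then k else k + d) = k + d := by
            rw [if_neg (by omega)]; omega
          have e2 : min L (if k + 1 ≤ i then k + 1 else k + 1 + d) = k + d + 1 := by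
            rw [if_neg (by omega)]; omega
          rw [e1, e2]; exact hchain (k + d) (by omega)
        · have e1 : min L (if k ≤ i then k else k + d) = L := by
            rw [if_neg (by omega)]; omega
          have e2 : min L (if k + 1 ≤ i then k + 1 else k + 1 + d) = L := by
            rw [if_neg (by omega)]; omega
          rw [e1, e2]; simpa using hr
  -- indices hitting `F`
  set B := (Finset.range (L + 1)).filter (fun i => x i ∈ F) with hBdef
  have hxinjB : Set.InjOn x B := by
    intro a ha b hb hab
    by_contra hne
    rcases Nat.lt_or_ge a b with h' | h'
    · exact key a b h' (by
        simp only [hBdef, Finset.coe_filter, Set.mem_setOf_eq, Finset.mem_range] at hb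
        omega) hab
    · exact key b a (by omega) (by
        simp only [hBdef, Finset.coe_filter, Set.mem_setOf_eq, Finset.mem_range] at ha
        omega) hab.symm
  have hBcard : B.card ≤ m := by
    calc B.card = (B.image x).card := (Finset.card_image_of_injOn hxinjB).symm
      _ ≤ hF.toFinset.card := Finset.card_le_card (by
          intro y hy
          simp only [Finset.mem_image] at hy
          obtain ⟨a, ha, rfl⟩ := hy
          simp only [hBdef, Finset.mem_filter] at ha
          simpa using ha.2)
  -- a block of `n+1` consecutive indices avoiding `F`
  have hgood : ∃ t ≤ m, ∀ k ≤ n, x ((n + 1) * t + k) ∉ F := by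
    by_contra hcon
    push_neg at hcon
    have hsub : Finset.range (m + 1) ⊆ B.image (· / (n + 1)) := by
      intro t htm
      simp only [Finset.mem_range] at htm
      obtain ⟨k, hk, hkF⟩ := hcon t (by omega)
      refine Finset.mem_image.mpr ⟨(n + 1) * t + k, ?_, ?_⟩
      · simp only [hBdef, Finset.mem_filter, Finset.mem_range]
        have h1 : (n + 1) * t ≤ (n + 1) * m := Nat.mul_le_mul_left _ (by omega)
        exact ⟨by omega, hkF⟩
      · show ((n + 1) * t + k) / (n + 1) = t
        rw [Nat.mul_add_div (Nat.succ_pos n), Nat.div_eq_of_lt (by omega)]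
        omega
    have hc : m + 1 ≤ B.card := by
      calc m + 1 = (Finset.range (m + 1)).card := (Finset.card_range _).symm
        _ ≤ (B.image (· / (n + 1))).card := Finset.card_le_card hsub
        _ ≤ B.card := Finset.card_image_le
    omega
  obtain ⟨t, htm, hgoodt⟩ := hgood
  have hbound : ∀ k ≤ n, (n + 1) * t + k ≤ L := by
    intro k hk
    have h1 : (n + 1) * t ≤ (n + 1) * m := Nat.mul_le_mul_left _ htm
    omega
  refine ⟨fun k => x ((n + 1) * t + min k n), ?_, ?_, ?_⟩
  · intro i hi j hj hij
    simp only [Nat.min_eq_left hi, Nat.min_eq_left hj]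
    rcases Nat.lt_or_ge i j with h' | h'
    · exact key _ _ (by omega) (hbound j hj)
    · exact fun e => key _ _ (by omega) (hbound i hi) e.symm
  · intro i hi
    simp only [Nat.min_eq_left hi]
    exact hgoodt i hi
  · intro i hi
    simp only [Nat.min_eq_left (by omega : i ≤ n), Nat.min_eq_left (by omega : i + 1 ≤ n)]
    have hb := hbound (i + 1) (by omega)
    have := hchain ((n + 1) * t + i) (by omega)
    simpa [Nat.add_assoc] using this
end

section
/- Let X be a metric space. Then there exists a bornologous injection from ℤ (with its usual metric) into X if and only if the wobbling group W(X) is not locally residually finite, i.e. there exists a finitely generated subgroup of W(X) that is not residually finite. -/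
/-- The wobbling group of a metric space: all permutations of bounded displacement. -/
def Wobbling (X : Type*) [MetricSpace X] : Subgroup (Equiv.Perm X) where
  carrier := {α : Equiv.Perm X | ∃ r : ℝ, ∀ x : X, dist x (α x) ≤ r}
  one_mem' := ⟨0, fun x => by simp⟩
  mul_mem' := by
    rintro a b ⟨r, hr⟩ ⟨s, hs⟩
    exact ⟨s + r, fun x =>
      (dist_triangle x (b x) (a (b x))).trans (add_le_add (hs x) (hr (b x)))⟩
  inv_mem' := by
    rintro a ⟨r, hr⟩
    refine ⟨r, fun x => ?_⟩
    have := hr (a⁻¹ x)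
    simpa [dist_comm] using this

/-- A map between metric spaces is bornologous if it maps pairs at uniformly bounded
distance to pairs at uniformly bounded distance. -/
def Bornologous {X Y : Type*} [MetricSpace X] [MetricSpace Y] (f : X → Y) : Prop :=
  ∀ r : ℝ, ∃ s : ℝ, ∀ x y : X, dist x y ≤ r → dist (f x) (f y) ≤ s

/-- A group is residually finite if every non-identity element survives in some finite
quotient. -/
def IsResiduallyFinite (K : Type*) [Group K] : Prop :=
  ∀ k : K, k ≠ 1 → ∃ (F : Type) (_ : Group F) (_ : Finite F) (π : K →* F), π k ≠ 1

/-!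
If `f : ℤ → X` is a bornologous injection, transporting permutations of `ℤ` along `f` embeds
`W(ℤ)` into `W(X)`. In `W(ℤ)` the shift `t` and the transposition `σ = (0 1)` generate a group that
is not residually finite: `σ` commutes with its conjugates by `t ^ n` for `n ≥ 2`, and in a finite
quotient `t ^ (N + 1)` acts like `t`, so there the involutions `σ` and `t σ t⁻¹` commute and
`(σ * t σ t⁻¹) ^ 2` becomes trivial; yet in `W(ℤ)` it is a 3-cycle.

Conversely, a group acting faithfully with finite orbits is residually finite (it acts on the
orbit of any point that a given element moves). So a finitely generated subgroup of `W(X)` that is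
not residually finite has an infinite orbit. Its Schreier graph with respect to a finite symmetric
generating set is locally finite, so Kőnig's lemma gives a geodesic ray, whose steps are bounded by
the displacements of the generators; folding `ℤ` onto `ℕ` turns the ray into a bornologous
injection.
-/

open Equiv Function MulAction
open scoped Pointwise

lemma dist_swap_apply_le {X : Type*} [MetricSpace X] [DecidableEq X] (a b x : X) :
    dist x (swap a b x) ≤ dist a b := by
  rcases eq_or_ne x a with rfl | hxa
  · simp
  rcases eq_or_ne x b with rfl | hxb
  · simp [dist_comm]
  · simp [swap_apply_of_ne_of_ne hxa hxb]

lemma Wobbling.swap_mem {X : Type*} [MetricSpace X] [DecidableEq X] (a b : X) :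
    swap a b ∈ Wobbling X :=
  ⟨dist a b, dist_swap_apply_le a b⟩

lemma Wobbling.exists_displacement_bound {X : Type*} [MetricSpace X] {T : Set (Wobbling X)}
    (hT : T.Finite) : ∃ R : ℝ, ∀ g ∈ T, ∀ x : X, dist x (g • x) ≤ R := by
  choose r hr using fun g : Wobbling X => g.2
  obtain ⟨R, hR⟩ := (hT.image r).bddAbove
  exact ⟨R, fun g hg x => (hr g x).trans (hR ⟨g, hg, rfl⟩)⟩

section Pushforward

variable {Y X : Type*} [MetricSpace Y] [MetricSpace X]

lemma Wobbling.viaEmbedding_mem (f : Y ↪ X) (hf : Bornologous f) {e : Perm Y}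
    (he : e ∈ Wobbling Y) : e.viaEmbedding f ∈ Wobbling X := by
  obtain ⟨r, hr⟩ := he
  obtain ⟨s, hs⟩ := hf r
  refine ⟨max s 0, fun x => ?_⟩
  by_cases hx : x ∈ Set.range f
  · obtain ⟨y, rfl⟩ := hx
    rw [e.viaEmbedding_apply]
    exact (hs y (e y) (hr y)).trans (le_max_left _ _)
  · rw [e.viaEmbedding_apply_of_notMem f x hx, dist_self]
    exact le_max_right _ _

noncomputable def Wobbling.pushforward (f : Y ↪ X) (hf : Bornologous f) :
    Wobbling Y →* Wobbling X :=
  ((Perm.viaEmbeddingHom f).comp (Wobbling Y).subtype).codRestrict _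
    fun e => Wobbling.viaEmbedding_mem f hf e.2

lemma Wobbling.pushforward_injective (f : Y ↪ X) (hf : Bornologous f) :
    Injective (Wobbling.pushforward f hf) := fun _ _ h =>
  Subtype.ext (Perm.viaEmbeddingHom_injective f (congrArg Subtype.val h))

end Pushforward

lemma IsResiduallyFinite.mul_conj_sq_eq_one {K : Type*} [Group K] (hK : IsResiduallyFinite K)
    {t σ : K} (hσ : σ ^ 2 = 1) (hfar : ∀ n : ℕ, 2 ≤ n → Commute σ (t ^ n * σ * (t ^ n)⁻¹)) :
    (σ * (t * σ * t⁻¹)) ^ 2 = 1 := by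
  by_contra hne
  obtain ⟨F, _, _, π, hπ⟩ := hK _ hne
  apply hπ
  have ht : π t ^ (Nat.card F + 1) = π t := by rw [pow_succ, pow_card_eq_one', one_mul]
  have hcomm : Commute (π σ) (π (t * σ * t⁻¹)) := by
    simpa [ht] using (hfar (Nat.card F + 1) (Nat.succ_le_succ Nat.card_pos)).map π
  have hσ' : π σ ^ 2 = 1 := by rw [← map_pow, hσ, map_one]
  rw [map_pow, map_mul, hcomm.mul_pow, hσ', ← map_pow, conj_pow, hσ]
  simp

lemma not_isResiduallyFinite_closure {G : Type*} [Group G] {t σ : G} (hσ : σ ^ 2 = 1)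
    (hfar : ∀ n : ℕ, 2 ≤ n → Commute σ (t ^ n * σ * (t ^ n)⁻¹))
    (hnear : (σ * (t * σ * t⁻¹)) ^ 2 ≠ 1) :
    ¬ IsResiduallyFinite (Subgroup.closure {t, σ}) := by
  intro hK
  set K := Subgroup.closure {t, σ}
  let t' : K := ⟨t, Subgroup.subset_closure (by simp)⟩
  let σ' : K := ⟨σ, Subgroup.subset_closure (by simp)⟩
  have hσ' : σ' ^ 2 = 1 := K.subtype_injective (by simpa [σ'] using hσ)
  have hfar' : ∀ n : ℕ, 2 ≤ n → Commute σ' (t' ^ n * σ' * (t' ^ n)⁻¹) := fun n hn =>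
    Subtype.ext (by simpa [t', σ'] using (hfar n hn).eq)
  exact hnear (by simpa [t', σ'] using congrArg K.subtype (hK.mul_conj_sq_eq_one hσ' hfar'))

lemma isResiduallyFinite_of_finite_orbits {K X : Type*} [Group K] [MulAction K X]
    [FaithfulSMul K X] (h : ∀ x : X, (orbit K x).Finite) : IsResiduallyFinite K := by
  intro k hk
  obtain ⟨x, hx⟩ : ∃ x : X, k • x ≠ x := by
    by_contra! hfix
    exact hk (eq_of_smul_eq_smul fun x => by rw [hfix, one_smul])
  have := (h x).to_subtype
  obtain ⟨n, ⟨e⟩⟩ := Finite.exists_equiv_fin (orbit K x)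
  refine ⟨Perm (Fin n), inferInstance, inferInstance,
    (permCongrHom e).toMonoidHom.comp (toPermHom K (orbit K x)), fun hπ => hx ?_⟩
  have hk1 : toPermHom K (orbit K x) k = 1 :=
    (map_eq_one_iff _ (permCongrHom e).injective).mp hπ
  simpa using congrArg Subtype.val (Equiv.ext_iff.mp hk1 ⟨x, mem_orbit_self x⟩)

lemma addRight_one_pow_apply (n : ℕ) (x : ℤ) : (Equiv.addRight (1 : ℤ) ^ n) x = x + n := by
  induction n generalizing x with
  | zero => simp
  | succ n ih => rw [pow_succ', Perm.mul_apply, ih]; simp only [coe_addRight, Nat.cast_succ]; ring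

lemma addRight_one_pow_mul_swap_mul_inv (n : ℕ) :
    Equiv.addRight (1 : ℤ) ^ n * swap 0 1 * (Equiv.addRight 1 ^ n)⁻¹ = swap (n : ℤ) (n + 1) := by
  rw [← swap_apply_apply, addRight_one_pow_apply, addRight_one_pow_apply, zero_add, add_comm]

namespace Wobbling

def shift : Wobbling ℤ := ⟨Equiv.addRight 1, 1, fun x => by simp⟩

def swap01 : Wobbling ℤ := ⟨swap 0 1, Wobbling.swap_mem 0 1⟩

lemma swap01_sq : swap01 ^ 2 = 1 := Subtype.ext (by simp [swap01, sq])

lemma commute_swap01_conj {n : ℕ} (hn : 2 ≤ n) :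
    Commute swap01 (shift ^ n * swap01 * (shift ^ n)⁻¹) := by
  refine Subtype.ext ?_
  simp only [Subgroup.coe_mul, Subgroup.coe_pow, Subgroup.coe_inv, shift, swap01]
  rw [addRight_one_pow_mul_swap_mul_inv]
  refine (Perm.Disjoint.commute (Perm.disjoint_swap_swap ?_)).eq
  simp only [List.nodup_cons, List.mem_cons, List.not_mem_nil, List.nodup_nil, or_false, not_or,
    not_false_eq_true, and_true]
  omega

lemma swap01_mul_conj_sq_ne_one : (swap01 * (shift * swap01 * shift⁻¹)) ^ 2 ≠ 1 := by
  intro h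
  have := congrArg (fun g : Wobbling ℤ => (g : Perm ℤ) 0) h
  simp [shift, swap01, sq, swap_apply_def] at this

end Wobbling

theorem exists_fg_not_isResiduallyFinite_of_bornologous {X : Type*} [MetricSpace X] (f : ℤ ↪ X)
    (hf : Bornologous f) :
    ∃ H : Subgroup (Wobbling X), H.FG ∧ ¬ IsResiduallyFinite H := by
  classical
  set Ψ := Wobbling.pushforward f hf
  refine ⟨Subgroup.closure {Ψ Wobbling.shift, Ψ Wobbling.swap01},
    ⟨{Ψ Wobbling.shift, Ψ Wobbling.swap01}, by simp⟩,
    not_isResiduallyFinite_closure ?_ (fun n hn => ?_) ?_⟩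
  · rw [← map_pow, Wobbling.swap01_sq, map_one]
  · simpa only [map_pow, map_mul, map_inv] using (Wobbling.commute_swap01_conj hn).map Ψ
  · simpa only [map_pow, map_mul, map_inv] using
      (map_ne_one_iff Ψ (Wobbling.pushforward_injective f hf)).mpr
        Wobbling.swap01_mul_conj_sq_ne_one

namespace MulAction

variable {M X : Type*} [Monoid M] [MulAction M X] (S : Set M) (x₀ : X)

def wordBall : ℕ → Set X
  | 0 => {x₀}
  | n + 1 => wordBall n ∪ S • wordBall n

def wordSphere : ℕ → Set X
  | 0 => {x₀}
  | n + 1 => wordBall S x₀ (n + 1) \ wordBall S x₀ n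

variable {S x₀}

lemma wordBall_finite (hS : S.Finite) (n : ℕ) : (wordBall S x₀ n).Finite := by
  induction n with
  | zero => exact Set.finite_singleton x₀
  | succ n ih => exact ih.union (hS.smul ih)

lemma wordBall_mono : Monotone (wordBall S x₀) :=
  monotone_nat_of_le_succ fun _ => Set.subset_union_left

lemma orbit_closure_subset_iUnion_wordBall :
    orbit (Submonoid.closure S) x₀ ⊆ ⋃ n, wordBall S x₀ n := by
  rintro _ ⟨⟨m, hm⟩, rfl⟩
  induction hm using Submonoid.closure_induction_left with
  | one => exact Set.mem_iUnion.2 ⟨0, by simp [wordBall]⟩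
  | mul_left s hs m _ ih =>
    obtain ⟨n, hn⟩ := Set.mem_iUnion.1 ih
    refine Set.mem_iUnion.2 ⟨n + 1, Or.inr ?_⟩
    show (s * m) • x₀ ∈ _
    rw [mul_smul]
    exact Set.smul_mem_smul hs hn

lemma wordSphere_subset_wordBall (n : ℕ) : wordSphere S x₀ n ⊆ wordBall S x₀ n := by
  cases n with
  | zero => rfl
  | succ n => exact Set.sdiff_subset

lemma eq_of_mem_wordSphere {y : X} {i j : ℕ} (hi : y ∈ wordSphere S x₀ i)
    (hj : y ∈ wordSphere S x₀ j) : i = j := by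
  wlog hij : i < j generalizing i j
  · rcases (not_lt.1 hij).eq_or_lt with h | h
    · exact h.symm
    · exact (this hj hi h).symm
  obtain ⟨k, rfl⟩ := Nat.exists_eq_add_of_lt hij
  exact absurd (wordBall_mono (by omega) (wordSphere_subset_wordBall i hi)) hj.2

lemma exists_smul_eq_of_mem_wordSphere_succ {y : X} {n : ℕ} (hy : y ∈ wordSphere S x₀ (n + 1)) :
    ∃ z ∈ wordSphere S x₀ n, ∃ s ∈ S, s • z = y := by
  obtain ⟨hy | hy, hyn⟩ := hy
  · exact absurd hy hyn
  obtain ⟨s, hs, z, hz, rfl⟩ := hy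
  refine ⟨z, ?_, s, hs, rfl⟩
  cases n with
  | zero => exact hz
  | succ n => exact ⟨hz, fun hzn => hyn (Or.inr (Set.smul_mem_smul hs hzn))⟩

lemma wordSphere_nonempty (hS : S.Finite) (hinf : (⋃ n, wordBall S x₀ n).Infinite) (n : ℕ) :
    (wordSphere S x₀ n).Nonempty := by
  cases n with
  | zero => exact Set.singleton_nonempty x₀
  | succ n =>
    by_contra hempty
    have hsucc : wordBall S x₀ (n + 1) = wordBall S x₀ n :=
      (Set.sdiff_eq_empty.1 (Set.not_nonempty_iff_eq_empty.1 hempty)).antisymm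
        (wordBall_mono n.le_succ)
    have hstable : ∀ k, wordBall S x₀ (n + k) = wordBall S x₀ n := by
      intro k
      induction k with
      | zero => rfl
      | succ k ih =>
        calc wordBall S x₀ (n + k + 1) = wordBall S x₀ (n + k) ∪ S • wordBall S x₀ (n + k) := rfl
          _ = wordBall S x₀ n := by rw [ih]; exact hsucc
    refine hinf ((wordBall_finite (x₀ := x₀) hS n).subset (Set.iUnion_subset fun m => ?_))
    rw [← hstable m]
    exact wordBall_mono (Nat.le_add_left m n)

-- One parent for all levels at once, so that it can be iterated (the spheres are disjoint).
lemma exists_wordSphere_parent (y : X) :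
    ∃ z, ∀ n, y ∈ wordSphere S x₀ (n + 1) → z ∈ wordSphere S x₀ n ∧ ∃ s ∈ S, s • z = y := by
  by_cases hy : ∃ n, y ∈ wordSphere S x₀ (n + 1)
  · obtain ⟨n, hn⟩ := hy
    obtain ⟨z, hz, hzy⟩ := exists_smul_eq_of_mem_wordSphere_succ hn
    refine ⟨z, fun m hm => ?_⟩
    obtain rfl : n = m := Nat.succ_injective (eq_of_mem_wordSphere hn hm)
    exact ⟨hz, hzy⟩
  · exact ⟨y, fun n hn => absurd ⟨n, hn⟩ hy⟩

theorem exists_injective_seq_of_infinite_orbit (hS : S.Finite)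
    (hx₀ : (orbit (Submonoid.closure S) x₀).Infinite) :
    ∃ u : ℕ → X, Injective u ∧ ∀ n, ∃ s ∈ S, s • u n = u (n + 1) := by
  choose p hp using exists_wordSphere_parent (S := S) (x₀ := x₀)
  have hmaps : ∀ i k, Set.MapsTo p^[k] (wordSphere S x₀ (i + k)) (wordSphere S x₀ i) := by
    intro i k
    induction k with
    | zero => exact Set.mapsTo_id _
    | succ k ih => exact ih.comp (fun y hy => (hp y (i + k) hy).1)
  have hinf := hx₀.mono orbit_closure_subset_iUnion_wordBall
  have : ∀ i, Nonempty (wordSphere S x₀ i) := fun i =>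
    (wordSphere_nonempty hS hinf i).to_subtype
  have : ∀ i, Finite (wordSphere S x₀ i) := fun i =>
    ((wordBall_finite hS i).subset (wordSphere_subset_wordBall i)).to_subtype
  obtain ⟨f, hf⟩ := exists_seq_forall_proj_of_forall_finite (α := fun i => wordSphere S x₀ i)
    (fun {i j} hij y => ⟨p^[j - i] y, hmaps i (j - i) (by rw [Nat.add_sub_cancel' hij]; exact y.2)⟩)
    (fun i y => by simp)
    (fun i j k hij hjk y => Subtype.ext <| (iterate_add_apply p _ _ _).symm.trans
      (congrArg (p^[·] y) (by omega)))
    (fun _ _ => Set.toFinite _)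
  refine ⟨fun i => f i, fun i j hij => eq_of_mem_wordSphere (f i).2 ?_, fun n => ?_⟩
  · simpa only [hij] using (f j).2
  have hparent : p (f (n + 1)) = f n := by simpa using congrArg Subtype.val (hf n.le_succ)
  obtain ⟨s, hs, hsy⟩ := (hp _ n (f (n + 1)).2).2
  exact ⟨s, hs, by rwa [hparent] at hsy⟩

end MulAction

lemma intEquivNat_dist_le (a b : ℤ) :
    dist (intEquivNat a) (intEquivNat b) ≤ 2 * dist a b + 1 := by
  have key (c : ℤ) : (intEquivNat c : ℤ) = if 0 ≤ c then 2 * c else -2 * c - 1 := by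
    rcases c with c | c
    · change ((2 * c : ℕ) : ℤ) = _
      simp
    · change ((2 * c + 1 : ℕ) : ℤ) = _
      rw [if_neg (Int.negSucc_lt_zero c).not_ge, Int.negSucc_eq]
      push_cast; ring
  have : |((intEquivNat a : ℤ) - intEquivNat b)| ≤ 2 * |a - b| + 1 := by
    rw [abs_le, key, key]
    rcases abs_cases (a - b) with ⟨h, _⟩ | ⟨h, _⟩ <;> rw [h] <;> split_ifs <;> constructor <;> omega
  rw [← Nat.dist_cast_real, Real.dist_eq, Int.dist_eq]
  exact_mod_cast this

lemma dist_le_mul_dist_of_dist_succ_le {X : Type*} [PseudoMetricSpace X] {u : ℕ → X} {r : ℝ}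
    (hu : ∀ n, dist (u n) (u (n + 1)) ≤ r) (m n : ℕ) : dist (u m) (u n) ≤ r * dist m n := by
  wlog hmn : m ≤ n generalizing m n
  · rw [dist_comm, dist_comm m]
    exact this n m (le_of_not_ge hmn)
  calc dist (u m) (u n) ≤ ∑ _ ∈ Finset.Ico m n, r :=
        dist_le_Ico_sum_of_dist_le hmn fun _ _ => hu _
    _ = r * dist m n := by
        rw [Finset.sum_const, Nat.card_Ico, nsmul_eq_mul, Nat.dist_eq, abs_sub_comm,
          abs_of_nonneg (by simpa using hmn), Nat.cast_sub hmn, mul_comm]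

lemma exists_injective_bornologous_of_seq {X : Type*} [MetricSpace X] {u : ℕ → X}
    (hu : Injective u) {r : ℝ} (hr : ∀ n, dist (u n) (u (n + 1)) ≤ r) :
    ∃ f : ℤ → X, Injective f ∧ Bornologous f := by
  have hr₀ : 0 ≤ r := dist_nonneg.trans (hr 0)
  refine ⟨u ∘ intEquivNat, hu.comp intEquivNat.injective, fun ρ => ⟨r * (2 * ρ + 1), ?_⟩⟩
  intro a b hab
  calc dist (u (intEquivNat a)) (u (intEquivNat b)) ≤ r * dist (intEquivNat a) (intEquivNat b) :=
        dist_le_mul_dist_of_dist_succ_le hr _ _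
    _ ≤ r * (2 * ρ + 1) := by
        gcongr
        linarith [intEquivNat_dist_le a b]

theorem exists_injective_bornologous_of_not_isResiduallyFinite {X : Type*} [MetricSpace X]
    {H : Subgroup (Wobbling X)} (hH : H.FG) (hnRF : ¬ IsResiduallyFinite H) :
    ∃ f : ℤ → X, Injective f ∧ Bornologous f := by
  obtain ⟨x₀, hx₀⟩ : ∃ x₀ : X, (orbit H x₀).Infinite := by
    by_contra! h
    exact hnRF (isResiduallyFinite_of_finite_orbits h)
  obtain ⟨S, rfl⟩ := hH
  set T : Set (Wobbling X) := ↑S ∪ (↑S)⁻¹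
  have hT : T.Finite := S.finite_toSet.union S.finite_toSet.inv
  have horbit : orbit (Subgroup.closure (S : Set (Wobbling X))) x₀ ⊆
      orbit (Submonoid.closure T) x₀ := by
    rintro _ ⟨⟨g, hg⟩, rfl⟩
    refine ⟨⟨g, ?_⟩, rfl⟩
    rwa [← Subgroup.closure_toSubmonoid]
  obtain ⟨u, hu, hstep⟩ := exists_injective_seq_of_infinite_orbit hT (hx₀.mono horbit)
  obtain ⟨R, hR⟩ := Wobbling.exists_displacement_bound hT
  refine exists_injective_bornologous_of_seq hu (r := R) fun n => ?_
  obtain ⟨s, hs, hsu⟩ := hstep n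
  exact hsu ▸ hR s hs (u n)

/-- A metric space `X` admits a bornologous injection of `ℤ` if and
only if the wobbling group of `X` is not locally residually finite. -/
theorem stmt_15 {X : Type*} [MetricSpace X] :
    (∃ f : ℤ → X, Function.Injective f ∧ Bornologous f) ↔
      ∃ H : Subgroup ↥(Wobbling X), H.FG ∧ ¬ IsResiduallyFinite ↥H := by
  constructor
  · rintro ⟨f, hf, hb⟩
    exact exists_fg_not_isResiduallyFinite_of_bornologous ⟨f, hf⟩ hb
  · rintro ⟨H, hH, hnRF⟩
    exact exists_injective_bornologous_of_not_isResiduallyFinite hH hnRF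
end

section
/- The wobbling group W(ℤ) of the integers with their usual metric is not locally residually finite: there exists a finitely generated subgroup of W(ℤ) that is not residually finite. -/
/-!
Let `a = (0 1)`, `b = (1 2)` and let `t` be the shift `x ↦ x + 3`, all of bounded displacement.
In a finite quotient the image of `t` has some finite order `n ≥ 1`, so `a` and its conjugate
`tⁿ a t⁻ⁿ = (3n, 3n+1)` have the same image. That conjugate is disjoint from `b`, hence commutes
with it, so the commutator `⁅a, b⁆`, a 3-cycle, dies in every finite quotient of `⟨a, b, t⟩`.
-/

open Equiv Equiv.Perm
open scoped commutatorElement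

lemma swap_mem_wobbling {X : Type*} [MetricSpace X] [DecidableEq X] (i j : X) :
    swap i j ∈ Wobbling X := by
  refine ⟨dist i j, fun x => ?_⟩
  rcases eq_or_ne x i with rfl | hi
  · simp
  rcases eq_or_ne x j with rfl | hj
  · simp [dist_comm]
  · simp [swap_apply_of_ne_of_ne hi hj]

lemma addRight_mem_wobbling {E : Type*} [NormedAddCommGroup E] (c : E) :
    Equiv.addRight c ∈ Wobbling E :=
  ⟨‖c‖, fun x => by simp [dist_eq_norm]⟩

lemma swap_commutatorElement_swap_ne_one {α : Type*} [DecidableEq α] {x y z : α}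
    (hxy : x ≠ y) (hyz : y ≠ z) (hxz : x ≠ z) : ⁅swap x y, swap y z⁆ ≠ 1 := by
  intro h
  have hx := congr($h x)
  simp [commutatorElement_def, swap_apply_of_ne_of_ne hxy hxz,
    swap_apply_of_ne_of_ne hxz.symm hyz.symm, hxz.symm] at hx

lemma commute_addRight_pow_conj_swap {n : ℕ} (hn : n ≠ 0) :
    Commute (Equiv.addRight (3 : ℤ) ^ n * swap 0 1 * (Equiv.addRight 3 ^ n)⁻¹) (swap 1 2) := by
  rw [← swap_apply_apply, Equiv.nsmul_addRight]
  refine (disjoint_swap_swap ?_).commute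
  simp only [Int.nsmul_eq_mul, coe_addRight, List.nodup_cons, List.mem_cons, List.not_mem_nil,
    List.nodup_nil, and_true, or_false, not_or, not_false_eq_true]
  omega

section ResidualFiniteness

variable {G : Type*} [Group G]

theorem not_isResiduallyFinite_of_commute_conj_pow {a b t : G} (hab : ⁅a, b⁆ ≠ 1)
    (hcomm : ∀ n ≠ 0, Commute (t ^ n * a * (t ^ n)⁻¹) b) : ¬IsResiduallyFinite G := by
  intro hG
  obtain ⟨F, _, _, π, hπ⟩ := hG _ hab
  set n := orderOf (π t)
  have hconj : π (t ^ n * a * (t ^ n)⁻¹) = π a := by simp [n, pow_orderOf_eq_one]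
  apply hπ
  calc π ⁅a, b⁆ = π ⁅t ^ n * a * (t ^ n)⁻¹, b⁆ := by simp only [map_commutatorElement, hconj]
    _ = 1 := by rw [(hcomm n (orderOf_pos _).ne').commutator_eq, map_one]

theorem not_isResiduallyFinite_of_injective {M : Type*} [Group M] (f : G →* M)
    (hf : Function.Injective f) {a b t : G} (hab : ⁅f a, f b⁆ ≠ 1)
    (hcomm : ∀ n ≠ 0, Commute (f t ^ n * f a * (f t ^ n)⁻¹) (f b)) :
    ¬IsResiduallyFinite G :=
  not_isResiduallyFinite_of_commute_conj_pow
    (fun h => hab (by rw [← map_commutatorElement, h, map_one]))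
    (fun n hn => .of_map hf (by simpa using hcomm n hn))

end ResidualFiniteness

/-- The wobbling group `W(ℤ)` is not locally residually finite:
it has a finitely generated subgroup that is not residually finite. -/
theorem stmt_17 :
    ∃ H : Subgroup ↥(Wobbling ℤ), H.FG ∧ ¬ IsResiduallyFinite ↥H := by
  let a : Wobbling ℤ := ⟨swap 0 1, swap_mem_wobbling 0 1⟩
  let b : Wobbling ℤ := ⟨swap 1 2, swap_mem_wobbling 1 2⟩
  let t : Wobbling ℤ := ⟨Equiv.addRight 3, addRight_mem_wobbling 3⟩
  let H := Subgroup.closure {a, b, t}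
  refine ⟨H, (Subgroup.fg_iff H).2 ⟨_, rfl, by simp⟩, ?_⟩
  exact not_isResiduallyFinite_of_injective ((Wobbling ℤ).subtype.comp H.subtype)
    (Subtype.val_injective.comp Subtype.val_injective)
    (a := ⟨a, Subgroup.subset_closure (by simp)⟩) (b := ⟨b, Subgroup.subset_closure (by simp)⟩)
    (t := ⟨t, Subgroup.subset_closure (by simp)⟩)
    (swap_commutatorElement_swap_ne_one (by decide) (by decide) (by decide))
    (fun _ hn => commute_addRight_pow_conj_swap hn)
end

section
/- Let X and Y be metric spaces and let f : X → Y be a bornologous injection. Then there exists an injective group homomorphism φ : W(X) → W(Y); explicitly, one may take φ(α)(y) = f(α(f⁻¹(y))) for y in the image of f and φ(α)(y) = y otherwise. -/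
/-- A bornologous injection `f : X → Y` induces an injective group
homomorphism `φ : W(X) → W(Y)`, given by `φ(α)(y) = f(α(f⁻¹(y)))` on the image of `f`
and by the identity elsewhere. -/
theorem stmt_18 {X Y : Type*} [MetricSpace X] [MetricSpace Y] (f : X → Y)
    (hinj : Function.Injective f) (hbor : Bornologous f) :
    ∃ φ : ↥(Wobbling X) →* ↥(Wobbling Y), Function.Injective φ ∧
      (∀ (α : ↥(Wobbling X)) (x : X),
        ((φ α : Equiv.Perm Y)) (f x) = f (((α : Equiv.Perm X)) x)) ∧
      (∀ (α : ↥(Wobbling X)) (y : Y), y ∉ Set.range f →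
        ((φ α : Equiv.Perm Y)) y = y) := by
  classical
  let ι : X ↪ Y := ⟨f, hinj⟩
  have hmem : ∀ α : ↥(Wobbling X), Equiv.Perm.viaEmbeddingHom ι (α : Equiv.Perm X) ∈ Wobbling Y := by
    rintro ⟨α, r, hr⟩
    obtain ⟨s, hs⟩ := hbor r
    refine ⟨max s 0, fun y => ?_⟩
    by_cases hy : y ∈ Set.range ι
    · obtain ⟨x, rfl⟩ := hy
      rw [Equiv.Perm.viaEmbeddingHom_apply, Equiv.Perm.viaEmbedding_apply]
      exact le_trans (hs x (α x) (hr x)) (le_max_left _ _)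
    · rw [Equiv.Perm.viaEmbeddingHom_apply, Equiv.Perm.viaEmbedding_apply_of_notMem _ _ _ hy]
      simp
  refine ⟨{
    toFun := fun α => ⟨Equiv.Perm.viaEmbeddingHom ι (α : Equiv.Perm X), hmem α⟩
    map_one' := by ext y; simp
    map_mul' := by intro a b; ext y; simp }, ?_, ?_, ?_⟩
  · intro a b hab
    apply Subtype.ext
    exact Equiv.Perm.viaEmbeddingHom_injective ι (by simpa using congrArg Subtype.val hab)
  · intro α x
    exact Equiv.Perm.viaEmbedding_apply _ ι x
  · intro α y hy
    exact Equiv.Perm.viaEmbedding_apply_of_notMem _ ι y hy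
end

section
/- There exists a uniformly discrete metric space X of uniformly bounded geometry such that the free group F₂ on two generators admits an injective group homomorphism into the wobbling group W(X), while there is no injective group homomorphism from W(ℤ) into W(X) (indeed, there is no bornologous injection from ℤ into X). -/
/-- The required properties of the example space: uniformly discrete, of uniformly
bounded geometry, `F₂` embeds into `W(X)`, yet `W(ℤ)` does not embed into `W(X)` and
there is no bornologous injection of `ℤ` into `X`. -/
def Example2Spec (X : Type) [MetricSpace X] : Prop :=
  (∃ ε : ℝ, 0 < ε ∧ ∀ x y : X, x ≠ y → ε ≤ dist x y) ∧
  (∀ r : ℝ, ∃ m : ℕ, ∀ x : X, {y : X | dist x y ≤ r}.ncard ≤ m) ∧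
  (∃ φ : FreeGroup (Fin 2) →* ↥(Wobbling X), Function.Injective φ) ∧
  (¬ ∃ φ : ↥(Wobbling ℤ) →* ↥(Wobbling X), Function.Injective φ) ∧
  (¬ ∃ f : ℤ → X, Function.Injective f ∧ Bornologous f)

/-!
`X` is a coarse disjoint union of finite Schreier graphs of `F₂`, coming from permutation
representations `ρ n` which together separate the elements of `F₂` (free groups are residually
finite). Each block carries its graph metric, and points of blocks `n ≠ n'` are at distance
`n + n' + 1`. The generators move points by at most one, so `F₂` embeds into `W(X)`, and the degrees
are bounded, so `X` has bounded geometry.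

A map moving points by at most `N` preserves `y ↦ max (block y) N`, whose fibres are finite. A
bornologous image of `ℤ` is therefore trapped in one fibre. In `W(ℤ)`, with `s` the shift and
`t = (0 1)`, the element `(t · sts⁻¹)²` is nontrivial, but it equals `t u (sts⁻¹) t u (sts⁻¹)` for
each far conjugate `u = sᴹts⁻ᴹ`; on a finite fibre preserved by the images of `s` and `t` some
far conjugate acts like `t`, and then the image of `(t · sts⁻¹)²` is trivial there.
-/

open Equiv

namespace FreeGroup

variable {α : Type*} {L : List (α × Bool)}

theorem IsReduced.snd_eq_of_succ (hL : IsReduced L) {i j : Fin L.length} (hij : i.val + 1 = j.val)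
    (h : L[i].1 = L[j].1) : L[i].2 = L[j].2 := by
  obtain ⟨j, hj⟩ := j
  obtain rfl : j = i.val + 1 := hij.symm
  exact List.IsChain.getElem hL i.val hj h

/-- The prescribed moves of a fixed generator form a partial injection: a clash would need two
adjacent letters `x, x⁻¹`. -/
theorem IsReduced.exists_perm (hL : IsReduced L) :
    ∃ π : α → Perm (Fin (L.length + 1)), ∀ j : Fin L.length,
      (bif L[j].2 then π L[j].1 else (π L[j].1)⁻¹) j.succ = j.castSucc := by
  -- for `b = true` these are the sources of the moves of generator `a`, for `b = false` the targets
  have hinj : ∀ (a : α) (b : Bool), Function.Injective fun j : {j : Fin L.length // L[j].1 = a} =>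
      if L[j.1].2 = b then j.1.succ else j.1.castSucc := by
    rintro a b ⟨i, hi⟩ ⟨j, hj⟩ hij
    have hsnd : ∀ {i j : Fin L.length}, i.val + 1 = j.val → L[i].1 = a → L[j].1 = a →
        L[i].2 = L[j].2 := fun h hi hj => hL.snd_eq_of_succ h (hi.trans hj.symm)
    simp only [Subtype.mk.injEq]
    dsimp only at hij
    split_ifs at hij with h₁ h₂ h₂ <;>
      simp only [Fin.ext_iff, Fin.val_succ, Fin.val_castSucc] at hij
    · exact Fin.ext (by omega)
    · exact absurd (hsnd hij hi hj ▸ h₁) h₂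
    · exact absurd (hsnd hij.symm hj hi ▸ h₂) h₁
    · exact Fin.ext hij
  choose π hπ using fun a => Perm.exists_extending_pair _ _ (hinj a true) (hinj a false)
  refine ⟨π, fun j => ?_⟩
  have h := hπ L[j].1 ⟨j, rfl⟩
  simp only [Fin.getElem_fin] at h ⊢
  cases hb : L[j.val].2
  · simpa [Equiv.symm_apply_eq, hb] using h.symm
  · simpa [hb] using h

theorem IsReduced.exists_lift_mk_apply_last (hL : IsReduced L) :
    ∃ π : α → Perm (Fin (L.length + 1)), lift π (mk L) (Fin.last _) = 0 := by
  obtain ⟨π, hπ⟩ := hL.exists_perm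
  refine ⟨π, ?_⟩
  have key : ∀ i : Fin (L.length + 1),
      ((L.drop i).map fun x => bif x.2 then π x.1 else (π x.1)⁻¹).prod (Fin.last _) = i := by
    refine Fin.reverseInduction (by simp) fun i ih => ?_
    rw [Fin.val_castSucc, List.drop_eq_getElem_cons i.isLt, List.map_cons, List.prod_cons,
      Perm.mul_apply, ← Fin.val_succ, ih]
    exact hπ i
  simpa [lift_mk] using key 0

theorem exists_hom_perm_fin_ne_one {w : FreeGroup α} (hw : w ≠ 1) :
    ∃ (n : ℕ) (ρ : FreeGroup α →* Perm (Fin n)), ρ w ≠ 1 := by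
  classical
  obtain ⟨π, hπ⟩ := (isReduced_toWord (x := w)).exists_lift_mk_apply_last
  refine ⟨_, lift π, fun h => ?_⟩
  have hlen : w.toWord.length ≠ 0 := by simpa [toWord_eq_nil_iff] using hw
  rw [mk_toWord, h] at hπ
  exact hlen (by simpa [Fin.ext_iff] using hπ)

theorem exists_separating_homs_perm_fin [Countable α] :
    ∃ (m : ℕ → ℕ) (ρ : ∀ n, FreeGroup α →* Perm (Fin (m n))), ∀ g, g ≠ 1 → ∃ n, ρ n g ≠ 1 := by
  have h : ∀ g : FreeGroup α, ∃ (k : ℕ) (ρ : FreeGroup α →* Perm (Fin k)), g ≠ 1 → ρ g ≠ 1 := by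
    intro g
    by_cases hg : g = 1
    · exact ⟨0, 1, fun h => absurd hg h⟩
    · obtain ⟨k, ρ, hρ⟩ := exists_hom_perm_fin_ne_one hg
      exact ⟨k, ρ, fun _ => hρ⟩
  choose k ρ hρ using h
  obtain ⟨e, he⟩ := exists_surjective_nat (FreeGroup α)
  refine ⟨k ∘ e, fun n => ρ (e n), fun g hg => ?_⟩
  obtain ⟨n, rfl⟩ := he g
  exact ⟨n, hρ _ hg⟩

end FreeGroup

theorem Equiv.Perm.exists_pow_apply_eq_self_of_finite {Y : Type*} (σ : Perm Y) {F : Set Y}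
    (hF : F.Finite) (hσ : ∀ y, σ y ∈ F ↔ y ∈ F) : ∃ k, 0 < k ∧ ∀ y ∈ F, (σ ^ k) y = y := by
  have := hF.to_subtype
  refine ⟨orderOf (σ.subtypePerm hσ), orderOf_pos _, fun y hy => ?_⟩
  have h := DFunLike.congr_fun (pow_orderOf_eq_one (σ.subtypePerm hσ)) ⟨y, hy⟩
  rw [Perm.subtypePerm_pow] at h
  exact congrArg Subtype.val h

theorem mul_sq_eq_of_commute_involution {G : Type*} [Group G] {t t₁ u : G} (hu : u ^ 2 = 1)
    (hut : Commute u t) (hut₁ : Commute u t₁) : (t * t₁) ^ 2 = t * u * t₁ * t * u * t₁ := calc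
  _ = t * t₁ * t * u ^ 2 * t₁ := by rw [hu, mul_one, sq]; simp only [mul_assoc]
  _ = t * ((t₁ * t) * u) * u * t₁ := by simp only [sq, mul_assoc]
  _ = t * (u * (t₁ * t)) * u * t₁ := by rw [(hut₁.mul_right hut).eq]
  _ = t * u * t₁ * t * u * t₁ := by simp only [mul_assoc]

theorem map_mul_conj_sq_eq_one {G Y β : Type*} [Group G] (φ : G →* Perm Y) {s t : G}
    (ht : t ^ 2 = 1)
    (hcomm : ∀ M ≥ 3, Commute (s ^ M * t * (s ^ M)⁻¹) t ∧
      Commute (s ^ M * t * (s ^ M)⁻¹) (s * t * s⁻¹))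
    (κ : Y → β) (hκ : ∀ b, (κ ⁻¹' {b}).Finite) (hκs : ∀ y, κ (φ s y) = κ y)
    (hκt : ∀ y, κ (φ t y) = κ y) :
    φ ((t * (s * t * s⁻¹)) ^ 2) = 1 := by
  ext y
  set F := κ ⁻¹' {κ y}
  obtain ⟨k, hk, hfix⟩ := (φ s).exists_pow_apply_eq_self_of_finite (hκ (κ y)) (by simp [hκs])
  set t₁ := s * t * s⁻¹
  -- `3 * k` is a multiple of the order of `φ s` on `F` that is large enough for `hcomm`
  set u := s ^ (3 * k) * t * (s ^ (3 * k))⁻¹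
  have hinv : ∀ g : G, g ^ 2 = 1 → ∀ z, φ g (φ g z) = z := fun g hg z => by
    rw [← Perm.mul_apply, ← map_mul, ← sq, hg, map_one, Perm.one_apply]
  have hconj : ∀ a : G, (a * t * a⁻¹) ^ 2 = 1 := fun a => by
    rw [conj_pow, ht, mul_one, mul_inv_cancel]
  have hκs' : ∀ z, κ (φ s⁻¹ z) = κ z := fun z => by
    rw [← hκs, ← Perm.mul_apply, ← map_mul, mul_inv_cancel, map_one, Perm.one_apply]
  have ht₁ : ∀ z, κ (φ t₁ z) = κ z := fun z => by
    simp only [t₁, map_mul, Perm.mul_apply, hκs, hκt, hκs']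
  have hu : ∀ z ∈ F, φ u z = φ t z := by
    intro z hz
    have hpow : ∀ z ∈ F, φ (s ^ (3 * k)) z = z := fun z hz => by
      rw [map_pow, pow_mul']
      exact Perm.pow_apply_eq_self_of_apply_eq_self (hfix z hz) 3
    have hpow' : φ (s ^ (3 * k))⁻¹ z = z := by
      rw [map_inv, Perm.inv_eq_iff_eq, hpow z hz]
    simp only [u, map_mul, Perm.mul_apply, hpow']
    exact hpow _ (by simpa [F, hκt] using hz)
  obtain ⟨hut, hut₁⟩ : Commute u t ∧ Commute u t₁ := hcomm (3 * k) (by omega)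
  have hu2 : u ^ 2 = 1 := hconj _
  rw [mul_sq_eq_of_commute_involution hu2 hut hut₁]
  simp only [map_mul, Perm.mul_apply]
  rw [hu _ (ht₁ y), hinv t ht, hinv t₁ (hconj s), hu y rfl, hinv t ht, Perm.one_apply]

namespace Wobbling

def intShift : Wobbling ℤ := ⟨Equiv.addRight 1, 1, fun x => by simp⟩

def intSwap : Wobbling ℤ := ⟨Equiv.swap 0 1, 1, fun x => by
  rcases eq_or_ne x 0 with rfl | h₀
  · simp
  rcases eq_or_ne x 1 with rfl | h₁
  · simp
  · simp [swap_apply_of_ne_of_ne h₀ h₁]⟩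

theorem coe_intShift_pow_apply (M : ℕ) (x : ℤ) :
    ((intShift ^ M : Wobbling ℤ) : Perm ℤ) x = x + M := by
  induction M generalizing x with
  | zero => simp
  | succ M ih =>
    rw [pow_succ, Subgroup.coe_mul, Perm.mul_apply, ih]
    simp [intShift]; ring

theorem coe_conj_intSwap (M : ℕ) :
    ((intShift ^ M * intSwap * (intShift ^ M)⁻¹ : Wobbling ℤ) : Perm ℤ) =
      Equiv.swap ((0 : ℤ) + M) (1 + M) := by
  rw [← coe_intShift_pow_apply, ← coe_intShift_pow_apply, swap_apply_apply]
  rfl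

theorem intSwap_sq : intSwap ^ 2 = 1 := Subtype.ext (swap_mul_self 0 1)

theorem coe_conj_intSwap_one :
    ((intShift * intSwap * intShift⁻¹ : Wobbling ℤ) : Perm ℤ) = Equiv.swap 1 2 := by
  simpa using coe_conj_intSwap 1

theorem commute_conj_intSwap {M : ℕ} (hM : 3 ≤ M) :
    Commute (intShift ^ M * intSwap * (intShift ^ M)⁻¹) intSwap ∧
      Commute (intShift ^ M * intSwap * (intShift ^ M)⁻¹) (intShift * intSwap * intShift⁻¹) := by
  have key : ∀ {g : Wobbling ℤ} {a b : ℤ}, (g : Perm ℤ) = Equiv.swap a b →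
      [(0 : ℤ) + M, 1 + M, a, b].Nodup → Commute (intShift ^ M * intSwap * (intShift ^ M)⁻¹) g :=
    fun hg hnd => Commute.of_map (f := (Wobbling ℤ).subtype) Subtype.val_injective (by
      simpa only [Subgroup.coe_subtype, coe_conj_intSwap, hg] using
        (Perm.disjoint_swap_swap hnd).commute)
  exact ⟨key rfl (by simp; omega), key coe_conj_intSwap_one (by simp; omega)⟩

theorem intSwap_mul_conj_sq_ne_one : (intSwap * (intShift * intSwap * intShift⁻¹)) ^ 2 ≠ 1 := by
  intro h
  have h0 := DFunLike.congr_fun (congrArg Subtype.val h) 0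
  rw [sq, Subgroup.coe_mul, Subgroup.coe_mul, coe_conj_intSwap_one] at h0
  simp [intSwap, swap_apply_def] at h0

theorem not_injective_of_finite_fibers {Y β : Type*} (φ : Wobbling ℤ →* Perm Y) (κ : Y → β)
    (hκ : ∀ b, (κ ⁻¹' {b}).Finite) (hκs : ∀ y, κ (φ intShift y) = κ y)
    (hκt : ∀ y, κ (φ intSwap y) = κ y) : ¬ Function.Injective φ := fun hφ =>
  intSwap_mul_conj_sq_ne_one <| hφ <| by
    rw [map_mul_conj_sq_eq_one φ intSwap_sq (fun M hM => commute_conj_intSwap hM) κ hκ hκs hκt,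
      map_one]

end Wobbling

namespace SimpleGraph

variable {V : Type*} (G : SimpleGraph V)

theorem exists_adj_of_edist_le_succ {u v : V} {k : ℕ} (h : G.edist v u ≤ k + 1) :
    v = u ∨ ∃ z, G.edist z u ≤ k ∧ G.Adj z v := by
  have hr : G.Reachable v u := G.reachable_of_edist_ne_top (ne_top_of_le_ne_top (by simp) h)
  obtain ⟨p, hp⟩ := hr.exists_walk_length_eq_edist
  cases p with
  | nil => exact Or.inl rfl
  | @cons _ z _ hvz q =>
    refine Or.inr ⟨z, (G.edist_le q).trans ?_, hvz.symm⟩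
    rw [← hp, Walk.length_cons, Nat.cast_succ] at h
    exact (ENat.add_le_add_iff_right ENat.one_ne_top).1 h

theorem exists_finset_covering_ball {N : V → Finset V} {d : ℕ} (hN : ∀ v w, G.Adj v w → w ∈ N v)
    (hd : ∀ v, (N v).card ≤ d) (u : V) (k : ℕ) :
    ∃ t : Finset V, t.card ≤ (d + 1) ^ k ∧ ∀ v, G.edist v u ≤ k → v ∈ t := by
  classical
  induction k with
  | zero => exact ⟨{u}, by simp, fun v hv => by simpa using hv⟩
  | succ k ih =>
    obtain ⟨t, ht, hvt⟩ := ih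
    refine ⟨t.biUnion fun z => insert z (N z), ?_, fun v hv => ?_⟩
    · refine (Finset.card_biUnion_le_card_mul _ _ (d + 1) fun z _ => ?_).trans ?_
      · exact (Finset.card_insert_le _ _).trans (Nat.succ_le_succ (hd z))
      · rw [pow_succ]; exact Nat.mul_le_mul_right _ ht
    · rcases G.exists_adj_of_edist_le_succ (by exact_mod_cast hv) with rfl | ⟨z, hz, hzv⟩
      · exact Finset.mem_biUnion.2 ⟨v, hvt v (by simp), Finset.mem_insert_self _ _⟩
      · exact Finset.mem_biUnion.2 ⟨z, hvt z hz, Finset.mem_insert_of_mem (hN z v hzv)⟩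

end SimpleGraph

section BlockSpace

variable {G ι : Type*} [Group G] {m : ℕ → ℕ}

set_option linter.unusedVariables false in
/-- `Σ n, Fin (m n)`, tagged with `ρ` and `s` because its metric depends on them. -/
def BlockSpace (ρ : ∀ n, G →* Perm (Fin (m n))) (s : ι → G) : Type := Σ n, Fin (m n)

namespace BlockSpace

variable (ρ : ∀ n, G →* Perm (Fin (m n))) (s : ι → G)

def block (x : BlockSpace ρ s) : ℕ := x.1

def action : G →* Perm (BlockSpace ρ s) :=
  (Perm.sigmaCongrRightHom fun n => Fin (m n)).comp (MonoidHom.pi ρ)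

def graph : SimpleGraph (BlockSpace ρ s) :=
  SimpleGraph.fromRel fun x y => ∃ i, action ρ s (s i) x = y

variable {ρ s}

theorem block_eq_of_adj {x y : BlockSpace ρ s} (h : (graph ρ s).Adj x y) :
    block ρ s x = block ρ s y := by
  obtain ⟨-, ⟨i, rfl⟩ | ⟨i, rfl⟩⟩ := (SimpleGraph.fromRel_adj _ _ _).1 h <;> rfl

theorem block_eq_of_reachable {x y : BlockSpace ρ s} :
    (graph ρ s).Reachable x y → block ρ s x = block ρ s y := by
  rintro ⟨p⟩
  induction p with
  | nil => rfl
  | cons h _ ih => exact (block_eq_of_adj h).trans ih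

variable (ρ s) in
/-- Points of different blocks lie in different components of `graph`, so they are at distance
exactly `block x + block y + 1`. -/
noncomputable def capDist (x y : BlockSpace ρ s) : ℕ∞ :=
  min ((graph ρ s).edist x y) (block ρ s x + block ρ s y + 1 : ℕ)

theorem capDist_comm (x y : BlockSpace ρ s) : capDist ρ s x y = capDist ρ s y x := by
  rw [capDist, capDist, SimpleGraph.edist_comm, Nat.add_comm (block ρ s x)]

theorem capDist_ne_top (x y : BlockSpace ρ s) : capDist ρ s x y ≠ ⊤ :=
  ne_top_of_le_ne_top (ENat.natCast_ne_top _) (min_le_right _ _)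

theorem capDist_eq_zero {x y : BlockSpace ρ s} : capDist ρ s x y = 0 ↔ x = y := by
  simp [capDist, SimpleGraph.edist_eq_zero_iff]

theorem capDist_triangle (x y z : BlockSpace ρ s) :
    capDist ρ s x z ≤ capDist ρ s x y + capDist ρ s y z := by
  have hcap : ∀ a b c : BlockSpace ρ s, (graph ρ s).edist a b ≠ ⊤ →
      capDist ρ s a c ≤ (graph ρ s).edist a b + (block ρ s b + block ρ s c + 1 : ℕ) :=
    fun a b c h => by
      rw [← block_eq_of_reachable (SimpleGraph.reachable_of_edist_ne_top h)]
      exact (min_le_right _ _).trans le_add_self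
  rcases min_choice ((graph ρ s).edist x y) (block ρ s x + block ρ s y + 1 : ℕ) with hxy | hxy <;>
  rcases min_choice ((graph ρ s).edist y z) (block ρ s y + block ρ s z + 1 : ℕ) with hyz | hyz <;>
  rw [show capDist ρ s x y = _ from hxy, show capDist ρ s y z = _ from hyz]
  · exact (min_le_left _ _).trans (SimpleGraph.edist_triangle ..)
  · by_cases h : (graph ρ s).edist x y = ⊤
    · simp [h]
    · exact hcap x y z h
  · by_cases h : (graph ρ s).edist y z = ⊤
    · simp [h]
    · rw [capDist_comm, add_comm, SimpleGraph.edist_comm, Nat.add_comm (block ρ s x)]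
      exact hcap z y x (by rwa [SimpleGraph.edist_comm])
  · exact (min_le_right _ _).trans (by norm_cast; omega)

noncomputable instance : MetricSpace (BlockSpace ρ s) where
  dist x y := (capDist ρ s x y).toNat
  dist_self x := by simp [capDist_eq_zero.2 rfl]
  dist_comm x y := by rw [capDist_comm]
  dist_triangle x y z := by
    rw [← Nat.cast_add, Nat.cast_le, ← ENat.toNat_add (capDist_ne_top x y) (capDist_ne_top y z)]
    exact ENat.toNat_le_toNat (capDist_triangle x y z)
      (WithTop.add_ne_top.2 ⟨capDist_ne_top x y, capDist_ne_top y z⟩)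
  eq_of_dist_eq_zero {x y} h := capDist_eq_zero.1 <| by
    simpa [capDist_ne_top] using (Nat.cast_eq_zero.1 h : (capDist ρ s x y).toNat = 0)

theorem dist_eq (x y : BlockSpace ρ s) : dist x y = (capDist ρ s x y).toNat := rfl

theorem dist_le_natCast_iff {x y : BlockSpace ρ s} {k : ℕ} :
    dist x y ≤ k ↔ capDist ρ s x y ≤ k := by
  rw [← ENat.natCast_toNat (capDist_ne_top x y), Nat.cast_le]
  exact Nat.cast_le

theorem one_le_dist {x y : BlockSpace ρ s} (h : x ≠ y) : 1 ≤ dist x y := by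
  have h0 : (capDist ρ s x y).toNat ≠ 0 := by
    simpa [ENat.toNat_eq_zero, capDist_ne_top, capDist_eq_zero] using h
  exact Nat.one_le_cast.2 (Nat.one_le_iff_ne_zero.2 h0)

theorem dist_action_le_one (i : ι) (x : BlockSpace ρ s) : dist x (action ρ s (s i) x) ≤ 1 := by
  rw [← Nat.cast_one, dist_le_natCast_iff, Nat.cast_one]
  refine (min_le_left _ _).trans (SimpleGraph.edist_le_one_iff_adj_or_eq.2 ?_)
  by_cases h : x = action ρ s (s i) x
  · exact Or.inr h
  · exact Or.inl ((SimpleGraph.fromRel_adj _ _ _).2 ⟨h, Or.inl ⟨i, rfl⟩⟩)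

theorem max_block_eq_of_dist_le {x y : BlockSpace ρ s} {N : ℕ} (h : dist x y ≤ N) :
    max (block ρ s x) N = max (block ρ s y) N := by
  by_cases hb : block ρ s x = block ρ s y
  · rw [hb]
  have htop : (graph ρ s).edist x y = ⊤ :=
    SimpleGraph.edist_eq_top_of_not_reachable (mt block_eq_of_reachable hb)
  have hcap := dist_le_natCast_iff.1 h
  simp only [capDist, htop, min_eq_right le_top, Nat.cast_le] at hcap
  omega

variable (ρ s) in
def lowBlocks (K : ℕ) : Finset (BlockSpace ρ s) := (Finset.range K).sigma fun _ => Finset.univ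

theorem mem_lowBlocks {K : ℕ} {y : BlockSpace ρ s} : y ∈ lowBlocks ρ s K ↔ block ρ s y < K :=
  (Finset.mem_sigma (s := Finset.range K) (t := fun _ => Finset.univ) (a := y)).trans
    (by simp [block])

theorem finite_setOf_max_block_eq (N k : ℕ) :
    {y : BlockSpace ρ s | max (block ρ s y) N = k}.Finite :=
  (lowBlocks ρ s (k + 1)).finite_toSet.subset fun y hy => by
    have hy : max (block ρ s y) N = k := hy
    simp only [Finset.mem_coe, mem_lowBlocks]
    omega

theorem exists_finset_graph_ball [Fintype ι] (x : BlockSpace ρ s) (k : ℕ) :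
    ∃ t : Finset (BlockSpace ρ s), t.card ≤ (2 * Fintype.card ι + 1) ^ k ∧
      ∀ y, (graph ρ s).edist y x ≤ k → y ∈ t := by
  classical
  refine (graph ρ s).exists_finset_covering_ball (N := fun v =>
    Finset.univ.image (fun i => action ρ s (s i) v) ∪
      Finset.univ.image (fun i => (action ρ s (s i))⁻¹ v)) (fun v w h => ?_) (fun v => ?_) x k
  · obtain ⟨-, ⟨i, rfl⟩ | ⟨i, rfl⟩⟩ := (SimpleGraph.fromRel_adj _ _ _).1 h
    · exact Finset.mem_union_left _ (Finset.mem_image_of_mem _ (Finset.mem_univ i))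
    · exact Finset.mem_union_right _ (Finset.mem_image.2 ⟨i, Finset.mem_univ i, by simp⟩)
  · rw [two_mul, ← Finset.card_univ]
    exact (Finset.card_union_le _ _).trans (add_le_add Finset.card_image_le Finset.card_image_le)

theorem exists_ncard_le [Fintype ι] (r : ℝ) :
    ∃ M : ℕ, ∀ x : BlockSpace ρ s, {y | dist x y ≤ r}.ncard ≤ M := by
  classical
  set K := ⌊r⌋₊
  refine ⟨(2 * Fintype.card ι + 1) ^ K + (lowBlocks ρ s K).card, fun x => ?_⟩
  obtain ⟨t, ht, hball⟩ := exists_finset_graph_ball x K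
  have hsub : {y | dist x y ≤ r} ⊆ ↑(t ∪ lowBlocks ρ s K) := by
    intro y (hy : dist x y ≤ r)
    have hK : dist x y ≤ K := by
      rw [dist_eq] at hy ⊢
      exact Nat.cast_le.2 (Nat.le_floor hy)
    rcases min_le_iff.1 (dist_le_natCast_iff.1 hK) with h | h
    · exact Finset.mem_union_left _ (hball y (by rwa [SimpleGraph.edist_comm]))
    · refine Finset.mem_union_right _ (mem_lowBlocks.2 ?_)
      have := Nat.cast_le.1 h
      omega
  calc {y | dist x y ≤ r}.ncard ≤ (t ∪ lowBlocks ρ s K).card :=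
        (Set.ncard_le_ncard hsub (Finset.finite_toSet _)).trans (Set.ncard_coe_finset _).le
    _ ≤ t.card + (lowBlocks ρ s K).card := Finset.card_union_le _ _
    _ ≤ _ := by omega

theorem action_mem_wobbling (hs : Subgroup.closure (Set.range s) = ⊤) (g : G) :
    action ρ s g ∈ Wobbling (BlockSpace ρ s) := by
  have hle : Subgroup.closure (Set.range s) ≤ (Wobbling (BlockSpace ρ s)).comap (action ρ s) :=
    Subgroup.closure_le _ |>.2 <| by
      rintro _ ⟨i, rfl⟩
      exact ⟨1, dist_action_le_one i⟩
  exact hle (hs ▸ Subgroup.mem_top g)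

theorem action_injective (hρ : ∀ g, g ≠ 1 → ∃ n, ρ n g ≠ 1) : Function.Injective (action ρ s) := by
  refine (injective_iff_map_eq_one _).2 fun g hg => ?_
  by_contra hne
  obtain ⟨n, hn⟩ := hρ g hne
  have h := Perm.sigmaCongrRightHom_injective (hg.trans (map_one _).symm)
  exact hn (congrFun h n)

theorem exists_injective_wobbling (hs : Subgroup.closure (Set.range s) = ⊤)
    (hρ : ∀ g, g ≠ 1 → ∃ n, ρ n g ≠ 1) :
    ∃ φ : G →* Wobbling (BlockSpace ρ s), Function.Injective φ :=
  ⟨(action ρ s).codRestrict _ (action_mem_wobbling hs),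
    fun _ _ h => action_injective hρ (congrArg Subtype.val h)⟩

theorem not_injective_wobbling_int (ψ : Wobbling ℤ →* Wobbling (BlockSpace ρ s)) :
    ¬ Function.Injective ψ := by
  intro hψ
  obtain ⟨a, ha⟩ := (ψ Wobbling.intShift).2
  obtain ⟨b, hb⟩ := (ψ Wobbling.intSwap).2
  set N := ⌈max a b⌉₊
  have hN : ∀ {r : ℝ} {α : Perm (BlockSpace ρ s)}, r ≤ max a b → (∀ x, dist x (α x) ≤ r) →
      ∀ x, max (block ρ s (α x)) N = max (block ρ s x) N := fun hr hα x =>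
    (max_block_eq_of_dist_le (((hα x).trans hr).trans (Nat.le_ceil _))).symm
  exact Wobbling.not_injective_of_finite_fibers ((Wobbling _).subtype.comp ψ)
    (fun y => max (block ρ s y) N) (fun k => finite_setOf_max_block_eq N k)
    (hN (le_max_left a b) ha) (hN (le_max_right a b) hb) ((Wobbling _).subtype_injective.comp hψ)

theorem not_injective_of_bornologous {f : ℤ → BlockSpace ρ s} (hf : Bornologous f) :
    ¬ Function.Injective f := by
  intro hinj
  obtain ⟨c, hc⟩ := hf 1
  set N := ⌈c⌉₊
  have hper : Function.Periodic (fun n => max (block ρ s (f n)) N) 1 := fun n =>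
    max_block_eq_of_dist_le ((hc _ _ (by simp)).trans (Nat.le_ceil c))
  have hrange : Set.range f ⊆ {y | max (block ρ s y) N = max (block ρ s (f 0)) N} := by
    rintro _ ⟨n, rfl⟩
    simpa using hper.int_mul_eq n
  exact Set.infinite_range_of_injective hinj ((finite_setOf_max_block_eq N _).subset hrange)

end BlockSpace

end BlockSpace

/-- There exists a uniformly discrete metric space of uniformly
bounded geometry such that `F₂` embeds into `W(X)`, while `W(ℤ)` does not embed into
`W(X)` (indeed there is no bornologous injection of `ℤ` into `X`). -/
theorem stmt_19 : ∃ (X : Type) (inst : MetricSpace X), @Example2Spec X inst := by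
  obtain ⟨m, ρ, hρ⟩ := FreeGroup.exists_separating_homs_perm_fin (α := Fin 2)
  open BlockSpace in
  exact ⟨BlockSpace ρ FreeGroup.of, inferInstance,
    ⟨1, one_pos, fun _ _ => one_le_dist⟩,
    exists_ncard_le,
    exists_injective_wobbling (FreeGroup.closure_range_of _) hρ,
    fun ⟨ψ, hψ⟩ => not_injective_wobbling_int ψ hψ,
    fun ⟨_, hinj, hf⟩ => not_injective_of_bornologous hf hinj⟩
end
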